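/- arXiv:1901.03645 — 11 statements merged into one kernel-verified Lean document; each statement's English description precedes it below -/
import Mathlib

section
/- Theorem 2.1 (avoiding sure loss for an upper probability mass function): The lower prevision P_{p̄} associated to an upper probability mass function p̄ avoids sure loss if and only if Σ_{ω ∈ Ω} p̄(ω) ≥ 1. Concretely: (for every function λ : Ω → [0,∞) one has max_{ω' ∈ Ω} Σ_{ω ∈ Ω} λ(ω)·(p̄(ω) − I_{ω}(ω')) ≥ 0) if and only if Σ_{ω ∈ Ω} p̄(ω) ≥ 1. -/
/-- Theorem 2.1: the lower prevision associated to an upper probability mass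
function `pbar` avoids sure loss iff `∑ ω, pbar ω ≥ 1`. -/
theorem avoids_sure_loss_iff_sum_ge_one
    {Ω : Type*} [Fintype Ω] [Nonempty Ω] [DecidableEq Ω]
    (pbar : Ω → ℝ) (hpbar : ∀ ω, 0 ≤ pbar ω ∧ pbar ω ≤ 1) :
    (∀ lam : Ω → ℝ, (∀ ω, 0 ≤ lam ω) →
      0 ≤ Finset.univ.sup' Finset.univ_nonempty
        (fun ω' => ∑ ω : Ω, lam ω * (pbar ω - (if ω' = ω then (1 : ℝ) else 0)))) ↔
    1 ≤ ∑ ω : Ω, pbar ω := by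
  constructor
  · intro h
    have h1 := h (fun _ => 1) (fun _ => zero_le_one)
    have key : ∀ ω' : Ω, (∑ ω : Ω, (1 : ℝ) * (pbar ω - (if ω' = ω then (1 : ℝ) else 0)))
        = (∑ ω : Ω, pbar ω) - 1 := by
      intro ω'
      simp [Finset.sum_sub_distrib]
    rw [Finset.le_sup'_iff] at h1
    obtain ⟨ω', -, hω'⟩ := h1
    rw [key ω'] at hω'
    linarith
  · intro hsum lam hlam
    obtain ⟨ω', -, hmin⟩ := Finset.exists_min_image Finset.univ lam Finset.univ_nonempty
    refine le_trans ?_ (Finset.le_sup' _ (Finset.mem_univ ω'))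
    have heq : (∑ ω : Ω, lam ω * (pbar ω - (if ω' = ω then (1 : ℝ) else 0)))
        = (∑ ω : Ω, lam ω * pbar ω) - lam ω' := by
      rw [show (∑ ω : Ω, lam ω * (pbar ω - (if ω' = ω then (1 : ℝ) else 0)))
          = ∑ ω : Ω, (lam ω * pbar ω - lam ω * (if ω' = ω then (1 : ℝ) else 0)) by
        apply Finset.sum_congr rfl; intro ω _; ring]
      rw [Finset.sum_sub_distrib]
      congr 1
      simp [mul_ite]
    rw [heq, sub_nonneg]
    calc lam ω' = lam ω' * 1 := (mul_one _).symm
      _ ≤ lam ω' * ∑ ω : Ω, pbar ω := by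
          exact mul_le_mul_of_nonneg_left hsum (hlam ω')
      _ = ∑ ω : Ω, lam ω' * pbar ω := Finset.mul_sum _ _ _
      _ ≤ ∑ ω : Ω, lam ω * pbar ω := by
          apply Finset.sum_le_sum
          intro ω _
          exact mul_le_mul_of_nonneg_right (hmin ω (Finset.mem_univ ω)) (hpbar ω).1
end

section
/- Theorem 2.2, lower part: Suppose the upper probability mass function p̄ satisfies Σ_{ω ∈ Ω} p̄(ω) ≥ 1 (i.e. the associated lower prevision avoids sure loss). Then for every subset A ⊆ Ω, the lower natural extension of the indicator of A equals E_{p̄}(A) = max{0, 1 − U(A^c)}, where A^c = Ω \ A. -/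
/-- The upper natural extension of a gamble `f` with respect to the upper
probability mass function `pbar`. -/
noncomputable def upperExt {Ω : Type*} [Fintype Ω] [DecidableEq Ω]
    (pbar f : Ω → ℝ) : ℝ :=
  sInf {β : ℝ | ∃ lam : Ω → ℝ, (∀ ω, 0 ≤ lam ω) ∧
    ∀ ω' : Ω, ∑ ω : Ω, lam ω * (pbar ω - (if ω' = ω then (1 : ℝ) else 0)) ≤ β - f ω'}

/-- The lower natural extension, conjugate of the upper natural extension. -/
noncomputable def lowerExt {Ω : Type*} [Fintype Ω] [DecidableEq Ω]
    (pbar f : Ω → ℝ) : ℝ :=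
  -(upperExt pbar (fun ω => -(f ω)))

/-!
Weak duality: averaging the constraints of a feasible pair `(β, λ)` against a probability mass
function `q ≤ p̄` gives `E_q(f) ≤ β`, because the multipliers contribute `∑ λ (p̄ - q) ≥ 0`.
Hence `Ē(-I_A) ≥ E_q(-I_A) = q(Aᶜ) - 1`, and since `∑ p̄ ≥ 1` one can choose `q ≤ p̄` with
`q(Aᶜ) = min 1 U(Aᶜ)`. Conversely `λ = 0` and `λ = I_{Aᶜ}` are feasible with `β = 0` and
`β = U(Aᶜ) - 1`, so `Ē(-I_A) = min 0 (U(Aᶜ) - 1)`.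
-/

open Finset

section

variable {Ω : Type*} [Fintype Ω]

def credalSet (pbar : Ω → ℝ) : Set (Ω → ℝ) :=
  {q | (∀ ω, 0 ≤ q ω ∧ q ω ≤ pbar ω) ∧ ∑ ω, q ω = 1}

lemma sum_mul_sub_ite_eq [DecidableEq Ω] (lam pbar : Ω → ℝ) (ω' : Ω) :
    ∑ ω, lam ω * (pbar ω - if ω' = ω then 1 else 0) = ∑ ω, lam ω * pbar ω - lam ω' := by
  simp [mul_sub, sum_sub_distrib]

lemma sum_mul_le_of_feasible {pbar q lam f : Ω → ℝ} {β : ℝ} (hq : q ∈ credalSet pbar)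
    (hlam : ∀ ω, 0 ≤ lam ω) (hfeas : ∀ ω', ∑ ω, lam ω * pbar ω - lam ω' ≤ β - f ω') :
    ∑ ω, q ω * f ω ≤ β := by
  obtain ⟨hqb, hq1⟩ := hq
  have hdom : ∑ ω, q ω * lam ω ≤ ∑ ω, lam ω * pbar ω :=
    sum_le_sum fun ω _ => by nlinarith [hqb ω, hlam ω]
  have havg : ∑ ω', q ω' * (∑ ω, lam ω * pbar ω - lam ω') ≤ ∑ ω', q ω' * (β - f ω') :=
    sum_le_sum fun ω' _ => mul_le_mul_of_nonneg_left (hfeas ω') (hqb ω').1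
  simp only [mul_sub, sum_sub_distrib, ← sum_mul, hq1, one_mul] at havg
  linarith

lemma sum_mul_le_upperExt [DecidableEq Ω] {pbar q : Ω → ℝ} (hq : q ∈ credalSet pbar)
    (f : Ω → ℝ) :
    ∑ ω, q ω * f ω ≤ upperExt pbar f := by
  refine le_csInf ⟨∑ ω, |f ω|, 0, fun _ => le_rfl, fun ω' => ?_⟩ ?_
  · have : f ω' ≤ ∑ ω, |f ω| :=
      (le_abs_self _).trans (single_le_sum (fun ω _ => abs_nonneg (f ω)) (mem_univ ω'))
    simpa using this
  · rintro β ⟨lam, hlam, hfeas⟩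
    exact sum_mul_le_of_feasible hq hlam fun ω' => sum_mul_sub_ite_eq lam pbar ω' ▸ hfeas ω'

lemma upperExt_le_of_feasible [DecidableEq Ω] {pbar q lam f : Ω → ℝ} {β : ℝ}
    (hq : q ∈ credalSet pbar) (hlam : ∀ ω, 0 ≤ lam ω)
    (hfeas : ∀ ω', ∑ ω, lam ω * pbar ω - lam ω' ≤ β - f ω') :
    upperExt pbar f ≤ β := by
  refine csInf_le ⟨∑ ω, q ω * f ω, ?_⟩ ⟨lam, hlam, fun ω' => ?_⟩
  · rintro b ⟨lam', hlam', hfeas'⟩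
    exact sum_mul_le_of_feasible hq hlam' fun ω' => sum_mul_sub_ite_eq lam' pbar ω' ▸ hfeas' ω'
  · rw [sum_mul_sub_ite_eq]
    exact hfeas ω'

lemma ite_mul_mem_credalSet [DecidableEq Ω] {pbar : Ω → ℝ} (hp : ∀ ω, 0 ≤ pbar ω)
    (B : Finset Ω) {a b : ℝ} (ha : a ∈ Set.Icc (0 : ℝ) 1) (hb : b ∈ Set.Icc (0 : ℝ) 1)
    (hsum : a * ∑ ω ∈ B, pbar ω + b * ∑ ω ∈ Bᶜ, pbar ω = 1) :
    (fun ω => if ω ∈ B then a * pbar ω else b * pbar ω) ∈ credalSet pbar := by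
  refine ⟨fun ω => ?_, ?_⟩
  · dsimp only
    split_ifs
    · exact ⟨mul_nonneg ha.1 (hp ω), mul_le_of_le_one_left (hp ω) ha.2⟩
    · exact ⟨mul_nonneg hb.1 (hp ω), mul_le_of_le_one_left (hp ω) hb.2⟩
  · rw [← sum_add_sum_compl B, ← hsum, mul_sum, mul_sum]
    congr 1 <;> refine sum_congr rfl fun ω hω => ?_
    · rw [if_pos hω]
    · rw [if_neg (mem_compl.mp hω)]

lemma exists_mem_credalSet_sum_eq_min [DecidableEq Ω] {pbar : Ω → ℝ} (hp : ∀ ω, 0 ≤ pbar ω)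
    (hmass : 1 ≤ ∑ ω, pbar ω) (B : Finset Ω) :
    ∃ q ∈ credalSet pbar, ∑ ω ∈ B, q ω = min 1 (∑ ω ∈ B, pbar ω) := by
  set U := ∑ ω ∈ B, pbar ω
  set V := ∑ ω ∈ Bᶜ, pbar ω
  have hUV : U + V = ∑ ω, pbar ω := sum_add_sum_compl B pbar
  have hmassB : ∀ a b, ∑ ω ∈ B, (if ω ∈ B then a * pbar ω else b * pbar ω) = a * U := by
    intro a b
    rw [mul_sum]
    exact sum_congr rfl fun ω hω => if_pos hω
  rcases le_or_gt 1 U with hU | hU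
  · have hU0 : U ≠ 0 := by positivity
    refine ⟨_, ite_mul_mem_credalSet hp B (a := U⁻¹) (b := 0)
      ⟨by positivity, inv_le_one_of_one_le₀ hU⟩ ⟨le_rfl, zero_le_one⟩
      (by simpa using inv_mul_cancel₀ hU0), ?_⟩
    rw [hmassB, inv_mul_cancel₀ hU0, min_eq_left hU]
  · have hV : 0 < V := by linarith
    refine ⟨_, ite_mul_mem_credalSet hp B (a := 1) (b := (1 - U) / V) ⟨zero_le_one, le_rfl⟩
      ⟨div_nonneg (by linarith) hV.le, (div_le_one hV).2 (by linarith)⟩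
      (by field_simp; ring), ?_⟩
    rw [hmassB, one_mul, min_eq_right hU.le]

end

theorem lowerExt_indicator_eq_general
    {Ω : Type*} [Fintype Ω] [DecidableEq Ω]
    (pbar : Ω → ℝ) (hpbar : ∀ ω, 0 ≤ pbar ω ∧ pbar ω ≤ 1)
    (hasl : 1 ≤ ∑ ω : Ω, pbar ω) (A : Finset Ω) :
    lowerExt pbar (fun ω => if ω ∈ A then (1 : ℝ) else 0) =
      max 0 (1 - ∑ ω ∈ Aᶜ, pbar ω) := by
  obtain ⟨q, hq, hqAc⟩ := exists_mem_credalSet_sum_eq_min (fun ω => (hpbar ω).1) hasl Aᶜ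
  set U := ∑ ω ∈ Aᶜ, pbar ω
  set negIndA : Ω → ℝ := fun ω => -(if ω ∈ A then 1 else 0)
  have hq_negIndA : ∑ ω, q ω * negIndA ω = min 0 (U - 1) := by
    have hsplit := sum_add_sum_compl A q
    simp only [negIndA, mul_neg, mul_ite, mul_one, mul_zero, sum_neg_distrib, sum_ite_mem,
      univ_inter]
    rw [show min 0 (U - 1) = min 1 U - 1 by rw [← min_sub_sub_right, sub_self]]
    linarith [hq.2]
  have hlower : min 0 (U - 1) ≤ upperExt pbar negIndA :=
    hq_negIndA ▸ sum_mul_le_upperExt hq negIndA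
  have hupper_zero : upperExt pbar negIndA ≤ 0 :=
    upperExt_le_of_feasible hq (lam := 0) (fun _ => le_rfl) fun ω' => by
      by_cases h : ω' ∈ A <;> simp [negIndA, h]
  have hupper_U : upperExt pbar negIndA ≤ U - 1 :=
    upperExt_le_of_feasible hq (lam := fun ω => if ω ∈ Aᶜ then 1 else 0)
      (fun ω => by split_ifs <;> norm_num) fun ω' => by
        simp only [ite_mul, one_mul, zero_mul, sum_ite_mem, univ_inter, negIndA]
        by_cases h : ω' ∈ A <;> simp [h, U]
  rw [lowerExt, le_antisymm (le_min hupper_zero hupper_U) hlower, ← max_neg_neg, neg_zero,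
    neg_sub]

/-- Theorem 2.2, lower part: `E(A) = max {0, 1 - U(Aᶜ)}`. -/
theorem lowerExt_indicator_eq
    {Ω : Type*} [Fintype Ω] [Nonempty Ω] [DecidableEq Ω]
    (pbar : Ω → ℝ) (hpbar : ∀ ω, 0 ≤ pbar ω ∧ pbar ω ≤ 1)
    (hasl : 1 ≤ ∑ ω : Ω, pbar ω) (A : Finset Ω) :
    lowerExt pbar (fun ω => if ω ∈ A then (1 : ℝ) else 0) =
      max 0 (1 - ∑ ω ∈ Aᶜ, pbar ω) :=
  lowerExt_indicator_eq_general pbar hpbar hasl A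
end

section
/- Theorem 2.2, upper part: Suppose the upper probability mass function p̄ satisfies Σ_{ω ∈ Ω} p̄(ω) ≥ 1 (i.e. the associated lower prevision avoids sure loss). Then for every subset A ⊆ Ω, the upper natural extension of the indicator of A equals Ē_{p̄}(A) = min{U(A), 1}. -/
/-!
Weak duality: if `q` is a probability mass function with `q ≤ p̄`, then averaging the defining
inequality of a feasible `β` against `q` gives `Σ q f ≤ β`, so `Σ_{A} q ≤ Ē(A)`. Such a `q`
with `Σ_{A} q = min {U(A), 1}` is obtained by rescaling `p̄` separately on `A` and on its
complement, which is possible because `Σ p̄ ≥ 1`. Conversely both `U(A)` (take `λ = I_A`) and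
`1` (take `λ = 0`) are feasible.
-/

open Finset

namespace UpperExt

variable {Ω : Type*} [Fintype Ω] [DecidableEq Ω]

def feasible (pbar f : Ω → ℝ) : Set ℝ :=
  {β : ℝ | ∃ lam : Ω → ℝ, (∀ ω, 0 ≤ lam ω) ∧
    ∀ ω' : Ω, ∑ ω : Ω, lam ω * (pbar ω - (if ω' = ω then (1 : ℝ) else 0)) ≤ β - f ω'}

theorem upperExt_eq_sInf_feasible (pbar f : Ω → ℝ) :
    upperExt pbar f = sInf (feasible pbar f) := rfl

theorem mem_feasible_of_le {pbar f : Ω → ℝ} {β : ℝ} (hf : ∀ ω, f ω ≤ β) :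
    β ∈ feasible pbar f :=
  ⟨0, fun _ => le_rfl, fun ω' => by simpa using hf ω'⟩

theorem sum_mem_feasible_indicator (pbar : Ω → ℝ) (A : Finset Ω) :
    ∑ ω ∈ A, pbar ω ∈ feasible pbar (fun ω => if ω ∈ A then 1 else 0) := by
  refine ⟨fun ω => if ω ∈ A then 1 else 0, fun ω => by positivity, fun ω' => le_of_eq ?_⟩
  simp only [ite_mul, one_mul, zero_mul, sum_ite_mem, univ_inter, sum_sub_distrib, sum_ite_eq]

theorem sum_mul_le_of_mem_feasible {pbar f q : Ω → ℝ} (hq0 : ∀ ω, 0 ≤ q ω)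
    (hqp : ∀ ω, q ω ≤ pbar ω) (hq1 : ∑ ω, q ω = 1) {β : ℝ} (hβ : β ∈ feasible pbar f) :
    ∑ ω, q ω * f ω ≤ β := by
  obtain ⟨lam, hlam, hβ⟩ := hβ
  have averaged : ∑ ω', q ω' * ∑ ω, lam ω * (pbar ω - if ω' = ω then 1 else 0) =
      ∑ ω, lam ω * (pbar ω - q ω) := by
    simp_rw [mul_sum]
    rw [sum_comm]
    refine sum_congr rfl fun ω _ => ?_
    simp only [mul_sub, mul_ite, mul_one, mul_zero, sum_sub_distrib, sum_ite_eq', mem_univ,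
      if_true, ← sum_mul, hq1]
    ring
  have gap_nonneg : 0 ≤ ∑ ω, lam ω * (pbar ω - q ω) :=
    sum_nonneg fun ω _ => mul_nonneg (hlam ω) (sub_nonneg.2 (hqp ω))
  calc ∑ ω, q ω * f ω = β - ∑ ω', q ω' * (β - f ω') := by
        simp only [mul_sub, sum_sub_distrib, ← sum_mul, hq1, one_mul, sub_sub_cancel]
    _ ≤ β - ∑ ω', q ω' * ∑ ω, lam ω * (pbar ω - if ω' = ω then 1 else 0) :=
        sub_le_sub_left (sum_le_sum fun ω' _ => mul_le_mul_of_nonneg_left (hβ ω') (hq0 ω')) β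
    _ = β - ∑ ω, lam ω * (pbar ω - q ω) := by rw [averaged]
    _ ≤ β := sub_le_self β gap_nonneg

end UpperExt

open UpperExt

theorem exists_mem_Icc_mul_eq {S t : ℝ} (ht0 : 0 ≤ t) (htS : t ≤ S) :
    ∃ c ∈ Set.Icc (0 : ℝ) 1, c * S = t :=
  ⟨t / S, ⟨div_nonneg ht0 (ht0.trans htS), div_le_one_of_le₀ htS (ht0.trans htS)⟩,
    div_mul_cancel_of_imp fun hS => le_antisymm (hS ▸ htS) ht0⟩

theorem exists_pmf_le_sum_eq_min {Ω : Type*} [Fintype Ω] {pbar : Ω → ℝ}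
    (hp : ∀ ω, 0 ≤ pbar ω) (hsum : 1 ≤ ∑ ω, pbar ω) (A : Finset Ω) :
    ∃ q : Ω → ℝ, (∀ ω, 0 ≤ q ω) ∧ (∀ ω, q ω ≤ pbar ω) ∧ ∑ ω, q ω = 1 ∧
      ∑ ω ∈ A, q ω = min (∑ ω ∈ A, pbar ω) 1 := by
  classical
  set U := ∑ ω ∈ A, pbar ω
  set m := min U 1
  have hsplit : U + ∑ ω ∈ Aᶜ, pbar ω = ∑ ω, pbar ω := sum_add_sum_compl A pbar
  have hAc_nonneg : 0 ≤ ∑ ω ∈ Aᶜ, pbar ω := sum_nonneg fun ω _ => hp ω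
  obtain ⟨c, ⟨hc0, hc1⟩, hcA⟩ := exists_mem_Icc_mul_eq (S := U) (t := m)
    (le_min (sum_nonneg fun ω _ => hp ω) zero_le_one) (min_le_left _ _)
  obtain ⟨d, ⟨hd0, hd1⟩, hdA⟩ := exists_mem_Icc_mul_eq (S := ∑ ω ∈ Aᶜ, pbar ω) (t := 1 - m)
    (sub_nonneg.2 (min_le_right _ _)) (sub_le_comm.1 (le_min (by linarith) (by linarith)))
  let q : Ω → ℝ := fun ω => (if ω ∈ A then c else d) * pbar ω
  have hqA : ∑ ω ∈ A, q ω = m := by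
    rw [← hcA, mul_sum]; exact sum_congr rfl fun ω hω => by simp [q, hω]
  have hqAc : ∑ ω ∈ Aᶜ, q ω = 1 - m := by
    rw [← hdA, mul_sum]; exact sum_congr rfl fun ω hω => by simp [q, mem_compl.1 hω]
  refine ⟨q, fun ω => mul_nonneg (by split_ifs <;> assumption) (hp ω),
    fun ω => mul_le_of_le_one_left (hp ω) (by split_ifs <;> assumption), ?_, hqA⟩
  rw [← sum_add_sum_compl A q, hqA, hqAc, add_sub_cancel]

theorem upperExt_indicator_eq_general
    {Ω : Type*} [Fintype Ω] [DecidableEq Ω]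
    (pbar : Ω → ℝ) (hpbar : ∀ ω, 0 ≤ pbar ω ∧ pbar ω ≤ 1)
    (hasl : 1 ≤ ∑ ω : Ω, pbar ω) (A : Finset Ω) :
    upperExt pbar (fun ω => if ω ∈ A then (1 : ℝ) else 0) =
      min (∑ ω ∈ A, pbar ω) 1 := by
  obtain ⟨q, hq0, hqp, hq1, hqA⟩ := exists_pmf_le_sum_eq_min (fun ω => (hpbar ω).1) hasl A
  have mem : min (∑ ω ∈ A, pbar ω) 1 ∈ feasible pbar (fun ω => if ω ∈ A then 1 else 0) := by
    rcases min_choice (∑ ω ∈ A, pbar ω) 1 with h | h <;> rw [h]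
    · exact sum_mem_feasible_indicator pbar A
    · exact mem_feasible_of_le fun ω => by split_ifs <;> norm_num
  rw [upperExt_eq_sInf_feasible]
  refine IsLeast.csInf_eq ⟨mem, fun β hβ => ?_⟩
  simpa [hqA] using sum_mul_le_of_mem_feasible hq0 hqp hq1 hβ

/-- Theorem 2.2, upper part: `Ē(A) = min {U(A), 1}`. -/
theorem upperExt_indicator_eq
    {Ω : Type*} [Fintype Ω] [Nonempty Ω] [DecidableEq Ω]
    (pbar : Ω → ℝ) (hpbar : ∀ ω, 0 ≤ pbar ω ∧ pbar ω ≤ 1)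
    (hasl : 1 ≤ ∑ ω : Ω, pbar ω) (A : Finset Ω) :
    upperExt pbar (fun ω => if ω ∈ A then (1 : ℝ) else 0) =
      min (∑ ω ∈ A, pbar ω) 1 :=
  upperExt_indicator_eq_general pbar hpbar hasl A
end

section
/- Corollary 2.4 (Choquet decomposition of the upper natural extension): Suppose Σ_{ω ∈ Ω} p̄(ω) ≥ 1. Let f be a gamble decomposed in terms of its level sets as f = Σ_{i=0}^{n} λ_i I_{A_i}, where λ_0 ∈ ℝ, λ_1, …, λ_n > 0, and Ω = A_0 ⊋ A_1 ⊋ ⋯ ⊋ A_n ≠ ∅. Then Ē_{p̄}(f) = Σ_{i=0}^{n} λ_i Ē_{p̄}(A_i). -/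
open Finset

section

variable {Ω : Type*} [Fintype Ω]

def IsUpperExtBound (pbar f : Ω → ℝ) (β : ℝ) : Prop :=
  ∃ lam : Ω → ℝ, (∀ ω, 0 ≤ lam ω) ∧ ∀ ω', ∑ ω, lam ω * pbar ω - lam ω' ≤ β - f ω'

theorem upperExt_eq_sInf [DecidableEq Ω] (pbar f : Ω → ℝ) :
    upperExt pbar f = sInf {β | IsUpperExtBound pbar f β} := by
  simp only [upperExt, IsUpperExtBound, mul_sub, mul_ite, mul_one, mul_zero, sum_sub_distrib,
    sum_ite_eq, mem_univ, if_true]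

structure IsDominatedPMF (pbar q : Ω → ℝ) : Prop where
  nonneg : ∀ ω, 0 ≤ q ω
  le : ∀ ω, q ω ≤ pbar ω
  sum_eq_one : ∑ ω, q ω = 1

variable {pbar f g q : Ω → ℝ} {β γ : ℝ}

theorem IsUpperExtBound.sum_mul_le (hβ : IsUpperExtBound pbar f β) (hq : IsDominatedPMF pbar q) :
    ∑ ω, q ω * f ω ≤ β := by
  obtain ⟨lam, hlam0, hlam⟩ := hβ
  set T := ∑ ω, lam ω * pbar ω
  calc ∑ ω, q ω * f ω ≤ ∑ ω, q ω * (β - T + lam ω) :=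
        sum_le_sum fun ω _ => mul_le_mul_of_nonneg_left (by linarith [hlam ω]) (hq.nonneg ω)
    _ = β - T + ∑ ω, lam ω * q ω := by
        simp only [mul_add, sum_add_distrib, ← sum_mul, hq.sum_eq_one, one_mul, mul_comm]
    _ ≤ β - T + T := by
        gcongr
        exact sum_le_sum fun ω _ => mul_le_mul_of_nonneg_left (hq.le ω) (hlam0 ω)
    _ = β := by ring

theorem upperExt_eq_of_isUpperExtBound [DecidableEq Ω] (hβ : IsUpperExtBound pbar f β)
    (hq : IsDominatedPMF pbar q) (hqf : ∑ ω, q ω * f ω = β) : upperExt pbar f = β := by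
  have hlb : β ∈ lowerBounds {b | IsUpperExtBound pbar f b} := fun b hb => hqf ▸ hb.sum_mul_le hq
  rw [upperExt_eq_sInf]
  exact le_antisymm (csInf_le ⟨β, hlb⟩ hβ) (le_csInf ⟨β, hβ⟩ hlb)

theorem isUpperExtBound_const (c : ℝ) : IsUpperExtBound pbar (fun _ => c) c :=
  ⟨0, fun _ => le_rfl, by simp⟩

theorem IsUpperExtBound.add (hf : IsUpperExtBound pbar f β) (hg : IsUpperExtBound pbar g γ) :
    IsUpperExtBound pbar (f + g) (β + γ) := by
  obtain ⟨l, hl0, hl⟩ := hf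
  obtain ⟨m, hm0, hm⟩ := hg
  refine ⟨l + m, fun ω => add_nonneg (hl0 ω) (hm0 ω), fun ω' => ?_⟩
  simp only [Pi.add_apply, add_mul, sum_add_distrib]
  linarith [hl ω', hm ω']

theorem IsUpperExtBound.const_mul (hf : IsUpperExtBound pbar f β) {c : ℝ} (hc : 0 ≤ c) :
    IsUpperExtBound pbar (fun ω => c * f ω) (c * β) := by
  obtain ⟨l, hl0, hl⟩ := hf
  refine ⟨fun ω => c * l ω, fun ω => mul_nonneg hc (hl0 ω), fun ω' => ?_⟩
  calc ∑ ω, c * l ω * pbar ω - c * l ω' = c * (∑ ω, l ω * pbar ω - l ω') := by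
        simp only [mul_sub, mul_sum, mul_assoc]
    _ ≤ c * (β - f ω') := mul_le_mul_of_nonneg_left (hl ω') hc
    _ = c * β - c * f ω' := mul_sub c β (f ω')

theorem isUpperExtBound_sum {ι : Type*} (s : Finset ι) {g : ι → Ω → ℝ} {β : ι → ℝ}
    (h : ∀ i ∈ s, IsUpperExtBound pbar (g i) (β i)) :
    IsUpperExtBound pbar (fun ω => ∑ i ∈ s, g i ω) (∑ i ∈ s, β i) := by
  classical
  induction s using Finset.induction_on with
  | empty => simpa using isUpperExtBound_const 0
  | insert i s hi ih =>
    simp only [sum_insert hi]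
    exact (h i (mem_insert_self i s)).add (ih fun j hj => h j (mem_insert_of_mem hj))

theorem isUpperExtBound_indicator [DecidableEq Ω] (A : Finset Ω) :
    IsUpperExtBound pbar (fun ω => if ω ∈ A then 1 else 0) (min 1 (∑ ω ∈ A, pbar ω)) := by
  rcases le_total (∑ ω ∈ A, pbar ω) 1 with hA | hA
  · refine ⟨fun ω => if ω ∈ A then 1 else 0, fun ω => ite_nonneg zero_le_one le_rfl, fun ω' => ?_⟩
    simp [ite_mul, sum_ite_mem, min_eq_right hA]
  · refine ⟨0, fun _ => le_rfl, fun ω' => ?_⟩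
    simp only [Pi.zero_apply, zero_mul, sum_const_zero, sub_zero, min_eq_left hA]
    split_ifs <;> norm_num

/-- The mixture `c • pbar|_C + (1 - c) • pbar|_B`, with `c` chosen to make the total mass `1`. -/
theorem exists_isDominatedPMF_between [DecidableEq Ω] (hpbar : ∀ ω, 0 ≤ pbar ω)
    {B C : Finset Ω} (hBC : B ⊆ C) (hB : ∑ ω ∈ B, pbar ω ≤ 1) (hC : 1 ≤ ∑ ω ∈ C, pbar ω) :
    ∃ q, IsDominatedPMF pbar q ∧ (∀ ω ∈ B, q ω = pbar ω) ∧ ∀ ω ∉ C, q ω = 0 := by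
  set SB := ∑ ω ∈ B, pbar ω
  set SC := ∑ ω ∈ C, pbar ω
  set c := (1 - SB) / (SC - SB)
  have hc0 : 0 ≤ c := div_nonneg (by linarith) (by linarith)
  have hc1 : c ≤ 1 := div_le_one_of_le₀ (by linarith) (by linarith)
  have hc : c * SC + (1 - c) * SB = 1 := by
    rcases eq_or_ne (SC - SB) 0 with h | h
    · have : SB = 1 := by linarith
      simp [c, this]
    · linear_combination div_mul_cancel₀ (1 - SB) h
  refine ⟨fun ω => (if ω ∈ C then c * pbar ω else 0) + if ω ∈ B then (1 - c) * pbar ω else 0,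
    ⟨fun ω => ?_, fun ω => ?_, ?_⟩, fun ω hω => ?_, fun ω hω => ?_⟩
  · have := hpbar ω
    split_ifs <;> positivity
  · have := hpbar ω
    by_cases hωB : ω ∈ B
    · simp only [hBC hωB, hωB, if_true]
      linarith
    · simp only [hωB, if_false, add_zero]
      split_ifs <;> nlinarith
  · rw [sum_add_distrib, ← sum_filter, ← sum_filter, ← mul_sum, ← mul_sum]
    simpa [filter_mem_eq_inter] using hc
  · simp only [hBC hω, hω, if_true]
    ring
  · have hωB : ω ∉ B := fun h => hω (hBC h)
    simp [hω, hωB]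

theorem IsDominatedPMF.sum_eq_one_of_superset (hq : IsDominatedPMF pbar q) {A C : Finset Ω}
    (hC : ∀ ω ∉ C, q ω = 0) (hCA : C ⊆ A) : ∑ ω ∈ A, q ω = 1 := by
  rw [← hq.sum_eq_one]
  exact sum_subset (subset_univ A) fun ω _ hω => hC ω fun h => hω (hCA h)

theorem exists_isDominatedPMF_sum_eq_min (hpbar : ∀ ω, 0 ≤ pbar ω) {n : ℕ} {A : ℕ → Finset Ω}
    (hA : ∀ i j, i ≤ j → j ≤ n → A j ⊆ A i) (h0 : 1 ≤ ∑ ω ∈ A 0, pbar ω) :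
    ∃ q, IsDominatedPMF pbar q ∧ ∀ i ≤ n, ∑ ω ∈ A i, q ω = min 1 (∑ ω ∈ A i, pbar ω) := by
  classical
  set k := Nat.findGreatest (fun i => 1 ≤ ∑ ω ∈ A i, pbar ω) n
  have hk : 1 ≤ ∑ ω ∈ A k, pbar ω :=
    Nat.findGreatest_spec (P := fun i => 1 ≤ ∑ ω ∈ A i, pbar ω) (Nat.zero_le n) h0
  have hkn : k ≤ n := Nat.findGreatest_le n
  have hlt : ∀ i, k < i → i ≤ n → ∑ ω ∈ A i, pbar ω < 1 := fun i hki hi =>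
    not_le.mp (Nat.findGreatest_is_greatest hki hi)
  set B := if k < n then A (k + 1) else ∅
  have hAB : ∀ i, k < i → i ≤ n → A i ⊆ B := fun i hki hi => by
    simpa [B, show k < n by omega] using hA (k + 1) i hki hi
  have hBk : B ⊆ A k := by
    by_cases h : k < n
    · simpa [B, h] using hA k (k + 1) (by omega) h
    · simp [B, h]
  have hB : ∑ ω ∈ B, pbar ω ≤ 1 := by
    by_cases h : k < n
    · simpa [B, h] using (hlt (k + 1) (by omega) h).le
    · simp [B, h]
  obtain ⟨q, hq, hqB, hqC⟩ := exists_isDominatedPMF_between hpbar hBk hB hk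
  refine ⟨q, hq, fun i hi => ?_⟩
  rcases le_or_gt i k with hik | hki
  · have hAi := hA i k hik hkn
    rw [hq.sum_eq_one_of_superset hqC hAi,
      min_eq_left (hk.trans (sum_le_sum_of_subset_of_nonneg hAi fun ω _ _ => hpbar ω))]
  · rw [min_eq_right (hlt i hki hi).le]
    exact sum_congr rfl fun ω hω => hqB ω (hAB i hki hi hω)

end

theorem subset_of_le_of_forall_lt_succ_subset {Ω : Type*} {n : ℕ} {A : ℕ → Finset Ω}
    (h : ∀ i < n, A (i + 1) ⊆ A i) {i j : ℕ} (hij : i ≤ j) (hjn : j ≤ n) : A j ⊆ A i := by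
  induction j, hij using Nat.le_induction with
  | base => rfl
  | succ j hij ih => exact (h j (by omega)).trans (ih (by omega))

theorem upperExt_levelSet_decomposition_general
    {Ω : Type*} [Fintype Ω] [DecidableEq Ω]
    (pbar : Ω → ℝ) (hpbar : ∀ ω, 0 ≤ pbar ω ∧ pbar ω ≤ 1)
    (hasl : 1 ≤ ∑ ω : Ω, pbar ω)
    (n : ℕ) (lam : ℕ → ℝ) (A : ℕ → Finset Ω)
    (hA0 : A 0 = Finset.univ)
    (hchain : ∀ i < n, A (i + 1) ⊂ A i)
    (hlam : ∀ i, 1 ≤ i → i ≤ n → 0 < lam i)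
    (f : Ω → ℝ)
    (hf : ∀ ω, f ω = ∑ i ∈ Finset.range (n + 1),
      lam i * (if ω ∈ A i then (1 : ℝ) else 0)) :
    upperExt pbar f = ∑ i ∈ Finset.range (n + 1),
      lam i * upperExt pbar (fun ω => if ω ∈ A i then (1 : ℝ) else 0) := by
  have hA i j (hij : i ≤ j) (hjn : j ≤ n) : A j ⊆ A i :=
    subset_of_le_of_forall_lt_succ_subset (fun i hi => (hchain i hi).subset) hij hjn
  obtain ⟨q, hq, hqA⟩ :=
    exists_isDominatedPMF_sum_eq_min (fun ω => (hpbar ω).1) hA (by simpa [hA0] using hasl)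
  have hexp i (hi : i ∈ range (n + 1)) :
      ∑ ω, q ω * (if ω ∈ A i then 1 else 0) = min 1 (∑ ω ∈ A i, pbar ω) := by
    simpa only [mul_ite, mul_one, mul_zero, sum_ite_mem, univ_inter]
      using hqA i (mem_range_succ_iff.mp hi)
  have hind i (hi : i ∈ range (n + 1)) :
      upperExt pbar (fun ω => if ω ∈ A i then 1 else 0) = min 1 (∑ ω ∈ A i, pbar ω) :=
    upperExt_eq_of_isUpperExtBound (isUpperExtBound_indicator _) hq (hexp i hi)
  rw [sum_congr rfl fun i hi => by rw [hind i hi], funext hf]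
  refine upperExt_eq_of_isUpperExtBound (isUpperExtBound_sum _ fun i hi => ?_) hq ?_
  · rcases Nat.eq_zero_or_pos i with rfl | hi0
    · simpa [hA0, min_eq_left hasl] using isUpperExtBound_const (pbar := pbar) (lam 0)
    · exact (isUpperExtBound_indicator _).const_mul (hlam i hi0 (mem_range_succ_iff.mp hi)).le
  · simp only [mul_sum]
    rw [sum_comm]
    refine sum_congr rfl fun i hi => ?_
    rw [← hexp i hi, mul_sum]
    exact sum_congr rfl fun ω _ => by ring

/-- Corollary 2.4: Choquet decomposition of the upper natural extension in
terms of the level sets of `f`. -/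
theorem upperExt_levelSet_decomposition
    {Ω : Type*} [Fintype Ω] [Nonempty Ω] [DecidableEq Ω]
    (pbar : Ω → ℝ) (hpbar : ∀ ω, 0 ≤ pbar ω ∧ pbar ω ≤ 1)
    (hasl : 1 ≤ ∑ ω : Ω, pbar ω)
    (n : ℕ) (lam : ℕ → ℝ) (A : ℕ → Finset Ω)
    (hA0 : A 0 = Finset.univ)
    (hchain : ∀ i < n, A (i + 1) ⊂ A i)
    (hAn : (A n).Nonempty)
    (hlam : ∀ i, 1 ≤ i → i ≤ n → 0 < lam i)
    (f : Ω → ℝ)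
    (hf : ∀ ω, f ω = ∑ i ∈ Finset.range (n + 1),
      lam i * (if ω ∈ A i then (1 : ℝ) else 0)) :
    upperExt pbar f = ∑ i ∈ Finset.range (n + 1),
      lam i * upperExt pbar (fun ω => if ω ∈ A i then (1 : ℝ) else 0) :=
  upperExt_levelSet_decomposition_general pbar hpbar hasl n lam A hA0 hchain hlam f hf
end

section
/- Theorem 2.6, first part: Let g_1, …, g_n be gambles whose family avoids sure loss, and let f be another gamble. Then the family {g_1, …, g_n, f} avoids sure loss if and only if Ē_D(f) ≥ 0, where Ē_D(f) is the upper natural extension of f relative to g_1, …, g_n. -/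
/-- The upper natural extension of a gamble `f` relative to the finite family
of gambles `g`. -/
noncomputable def upperExtD {Ω : Type*} [Fintype Ω] {n : ℕ}
    (g : Fin n → Ω → ℝ) (f : Ω → ℝ) : ℝ :=
  sInf {β : ℝ | ∃ lam : Fin n → ℝ, (∀ i, 0 ≤ lam i) ∧
    ∀ ω : Ω, ∑ i : Fin n, lam i * g i ω ≤ β - f ω}

/-- Theorem 2.6, first part: if `g₁, …, gₙ` avoids sure loss, then the family
extended with `f` avoids sure loss iff `Ē_D(f) ≥ 0`. -/
theorem extended_avoids_sure_loss_iff_upperExtD_nonneg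
    {Ω : Type*} [Fintype Ω] [Nonempty Ω] (n : ℕ) (g : Fin n → Ω → ℝ)
    (hasl : ∀ lam : Fin n → ℝ, (∀ i, 0 ≤ lam i) →
      0 ≤ Finset.univ.sup' Finset.univ_nonempty
        (fun ω => ∑ i : Fin n, lam i * g i ω))
    (f : Ω → ℝ) :
    (∀ (lam0 : ℝ) (lam : Fin n → ℝ), 0 ≤ lam0 → (∀ i, 0 ≤ lam i) →
      0 ≤ Finset.univ.sup' Finset.univ_nonempty
        (fun ω => lam0 * f ω + ∑ i : Fin n, lam i * g i ω)) ↔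
    0 ≤ upperExtD g f := by
  set S := {β : ℝ | ∃ lam : Fin n → ℝ, (∀ i, 0 ≤ lam i) ∧
    ∀ ω : Ω, ∑ i : Fin n, lam i * g i ω ≤ β - f ω} with hS
  have hSne : S.Nonempty := by
    refine ⟨Finset.univ.sup' Finset.univ_nonempty f, fun _ => 0, fun i => le_refl 0,
      fun ω => ?_⟩
    have h1 := Finset.le_sup' f (Finset.mem_univ ω)
    have h2 : ∑ i : Fin n, (0 : ℝ) * g i ω = 0 := by simp
    rw [h2]
    linarith
  have hSbdd : BddBelow S := by
    refine ⟨Finset.univ.inf' Finset.univ_nonempty f, ?_⟩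
    rintro β ⟨lam, hlam, hβ⟩
    have h0 := hasl lam hlam
    obtain ⟨ω, -, hω⟩ := Finset.exists_mem_eq_sup' Finset.univ_nonempty
      (fun ω => ∑ i : Fin n, lam i * g i ω)
    rw [hω] at h0
    have h1 := hβ ω
    have h2 := Finset.inf'_le f (Finset.mem_univ ω)
    linarith
  unfold upperExtD
  rw [← hS]
  constructor
  · intro h
    apply le_csInf hSne
    rintro β ⟨lam, hlam, hβ⟩
    have h0 := h 1 lam zero_le_one hlam
    obtain ⟨ω, -, hω⟩ := Finset.exists_mem_eq_sup' Finset.univ_nonempty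
      (fun ω => 1 * f ω + ∑ i : Fin n, lam i * g i ω)
    rw [hω] at h0
    have h1 := hβ ω
    simp only [one_mul] at h0
    linarith
  · intro h lam0 lam hlam0 hlam
    by_contra hc
    push_neg at hc
    rcases eq_or_lt_of_le hlam0 with h0 | h0
    · have h1 := hasl lam hlam
      have heq : (fun ω => ∑ i : Fin n, lam i * g i ω)
          = fun ω => lam0 * f ω + ∑ i : Fin n, lam i * g i ω := by
        funext ω; rw [← h0]; ring
      rw [heq] at h1
      linarith
    · set s := Finset.univ.sup' Finset.univ_nonempty
        (fun ω => lam0 * f ω + ∑ i : Fin n, lam i * g i ω) with hs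
      have hβ : s / lam0 ∈ S := by
        refine ⟨fun i => lam i / lam0, fun i => div_nonneg (hlam i) (le_of_lt h0),
          fun ω => ?_⟩
        have hle := Finset.le_sup' (fun ω => lam0 * f ω + ∑ i : Fin n, lam i * g i ω)
          (Finset.mem_univ ω)
        have he : ∑ i : Fin n, lam i / lam0 * g i ω = (∑ i : Fin n, lam i * g i ω) / lam0 := by
          rw [Finset.sum_div]
          exact Finset.sum_congr rfl fun i _ => by ring
        rw [he]
        rw [div_le_iff₀ h0]
        have : (s / lam0 - f ω) * lam0 = s - lam0 * f ω := by
          field_simp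
        rw [this]
        exact le_of_le_of_eq (by linarith [hle]) rfl
      have h2 := csInf_le hSbdd hβ
      have h3 : s / lam0 < 0 := div_neg_of_neg_of_pos hc h0
      linarith
end

section
/- Theorem 2.6, second part: Let g_1, …, g_n be gambles whose family avoids sure loss, and let f be another gamble such that the family {g_1, …, g_n, f} does not avoid sure loss. Then there exist λ_1, …, λ_n ≥ 0 such that for all ω ∈ Ω, f(ω) + Σ_{i=1}^{n} λ_i g_i(ω) ≤ Ē_D(f) < 0; that is, the combination f + Σ_{i=1}^{n} λ_i g_i results in a loss of at least |Ē_D(f)| in every outcome. -/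
open Finset

section Cone

variable {E ι : Type*} [AddCommGroup E] [Module ℝ E]

def conicHull (v : ι → E) (s : Finset ι) : Set E :=
  {x | ∃ c : ι → ℝ, (∀ i ∈ s, 0 ≤ c i) ∧ ∑ i ∈ s, c i • v i = x}

lemma conicHull_mono (v : ι → E) {s t : Finset ι} (hts : t ⊆ s) :
    conicHull v t ⊆ conicHull v s := by
  classical
  rintro _ ⟨c, hc, rfl⟩
  refine ⟨fun i => if i ∈ t then c i else 0, fun i _ => ?_, ?_⟩
  · by_cases hi : i ∈ t <;> simp [hi, hc]
  · simp only [ite_smul, zero_smul, sum_ite_mem, inter_eq_right.mpr hts]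

lemma exists_erase_sum_smul_eq_of_not_linearIndepOn [DecidableEq ι] {v : ι → E}
    {s : Finset ι} (hs : ¬ LinearIndepOn ℝ v (s : Set ι)) {c : ι → ℝ}
    (hc : ∀ i ∈ s, 0 ≤ c i) :
    ∃ j ∈ s, ∃ μ : ι → ℝ, (∀ i ∈ s.erase j, 0 ≤ μ i) ∧
      ∑ i ∈ s.erase j, μ i • v i = ∑ i ∈ s, c i • v i := by
  obtain ⟨D, hD, hDpos⟩ : ∃ D : ι → ℝ, ∑ i ∈ s, D i • v i = 0 ∧ ∃ i ∈ s, 0 < D i := by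
    obtain ⟨D, hD, i, hi, hDi⟩ := not_linearIndepOn_finset_iff.mp hs
    rcases hDi.lt_or_gt with hneg | hpos
    · exact ⟨-D, by simp [neg_smul, sum_neg_distrib, hD], i, hi, neg_pos.mpr hneg⟩
    · exact ⟨D, hD, i, hi, hpos⟩
  -- Subtract the largest multiple `r • D` that keeps all coefficients nonnegative.
  obtain ⟨j, hjT, hjmin⟩ := (s.filter (0 < D ·)).exists_min_image (fun i => c i / D i)
    (let ⟨i, hi, hDi⟩ := hDpos; ⟨i, mem_filter.mpr ⟨hi, hDi⟩⟩)
  obtain ⟨hjs, hDj⟩ := mem_filter.mp hjT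
  set r := c j / D j
  have hr : 0 ≤ r := div_nonneg (hc j hjs) hDj.le
  refine ⟨j, hjs, fun i => c i - r * D i, fun i hi => ?_, ?_⟩
  · have his := mem_of_mem_erase hi
    rw [sub_nonneg]
    by_cases hDi : 0 < D i
    · exact (le_div_iff₀ hDi).mp (hjmin i (mem_filter.mpr ⟨his, hDi⟩))
    · exact (mul_nonpos_of_nonneg_of_nonpos hr (not_lt.mp hDi)).trans (hc i his)
  · rw [sum_erase _ (by simp [r, hDj.ne'])]
    simp only [sub_smul, sum_sub_distrib, mul_smul, ← smul_sum, hD, smul_zero, sub_zero]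

theorem exists_linearIndepOn_of_mem_conicHull (v : ι → E) (s : Finset ι) {x : E}
    (hx : x ∈ conicHull v s) :
    ∃ t ⊆ s, LinearIndepOn ℝ v (t : Set ι) ∧ x ∈ conicHull v t := by
  classical
  induction s using Finset.strongInduction with
  | H s ih =>
    by_cases hli : LinearIndepOn ℝ v (s : Set ι)
    · exact ⟨s, subset_rfl, hli, hx⟩
    obtain ⟨c, hc, rfl⟩ := hx
    obtain ⟨j, hj, μ, hμ, hsum⟩ := exists_erase_sum_smul_eq_of_not_linearIndepOn hli hc
    obtain ⟨t, hts, htli, htx⟩ := ih _ (erase_ssubset hj) ⟨μ, hμ, hsum⟩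
    exact ⟨t, hts.trans (erase_subset j s), htli, htx⟩

lemma conicHull_eq_image_linearCombination (v : ι → E) (t : Finset ι) :
    conicHull v t =
      Fintype.linearCombination ℝ (fun i : t => v i) '' Set.Ici 0 := by
  classical
  ext x
  constructor
  · rintro ⟨c, hc, rfl⟩
    refine ⟨fun i => c i, fun i => hc i i.2, ?_⟩
    simp [Fintype.linearCombination_apply, ← t.sum_attach]
  · rintro ⟨c, hc, rfl⟩
    refine ⟨fun i => if hi : i ∈ t then c ⟨i, hi⟩ else 0,
      fun i hi => by simpa [hi] using hc ⟨i, hi⟩, ?_⟩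
    simp +contextual [Fintype.linearCombination_apply, ← t.sum_attach]

lemma isClosed_conicHull_of_linearIndepOn [TopologicalSpace E] [IsTopologicalAddGroup E]
    [ContinuousSMul ℝ E] [T2Space E] {v : ι → E} {t : Finset ι}
    (ht : LinearIndepOn ℝ v (t : Set ι)) : IsClosed (conicHull v t) := by
  rw [conicHull_eq_image_linearCombination]
  have hinj : LinearMap.ker (Fintype.linearCombination ℝ (fun i : t => v i)) = ⊥ :=
    LinearMap.ker_eq_bot.mpr ht.fintypeLinearCombination_injective
  exact (LinearMap.isClosedEmbedding_of_injective hinj).isClosedMap _ isClosed_Ici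

theorem isClosed_conicHull [TopologicalSpace E] [IsTopologicalAddGroup E]
    [ContinuousSMul ℝ E] [T2Space E] (v : ι → E) (s : Finset ι) :
    IsClosed (conicHull v s) := by
  have hunion : conicHull v s =
      ⋃ t ∈ {t : Finset ι | t ⊆ s ∧ LinearIndepOn ℝ v (t : Set ι)}, conicHull v t := by
    refine subset_antisymm (fun x hx => ?_) (Set.iUnion₂_subset fun t ht => conicHull_mono v ht.1)
    obtain ⟨t, hts, ht, hxt⟩ := exists_linearIndepOn_of_mem_conicHull v s hx
    exact Set.mem_biUnion ⟨hts, ht⟩ hxt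
  rw [hunion]
  exact (s.powerset.finite_toSet.subset fun t ht => mem_powerset.mpr ht.1).isClosed_biUnion
    fun t ht => isClosed_conicHull_of_linearIndepOn ht.2

end Cone

section Gambles

variable {Ω ι : Type*} [Fintype ι]

def AvoidsSureLoss (g : ι → Ω → ℝ) : Prop :=
  ∀ lam : ι → ℝ, (∀ i, 0 ≤ lam i) → ∃ ω, 0 ≤ ∑ i, lam i * g i ω

def sellingPrices (g : ι → Ω → ℝ) (f : Ω → ℝ) : Set ℝ :=
  {β | ∃ lam : ι → ℝ, (∀ i, 0 ≤ lam i) ∧ ∀ ω, ∑ i, lam i * g i ω ≤ β - f ω}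

lemma isClosed_setOf_exists_nonneg_sum_le [Fintype Ω] (g : ι → Ω → ℝ) :
    IsClosed {x : Ω → ℝ | ∃ lam : ι → ℝ, (∀ i, 0 ≤ lam i) ∧ ∑ i, lam i • g i ≤ x} := by
  classical
  -- Adding the coordinate vectors as generators absorbs the slack `x - ∑ i, lam i • g i`.
  set e : Ω → Ω → ℝ := fun ω ω' => if ω = ω' then 1 else 0
  convert isClosed_conicHull (Sum.elim g e) univ using 1
  ext x
  simp only [conicHull, mem_univ, true_implies, Fintype.sum_sum_type, Sum.elim_inl,
    Sum.elim_inr]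
  constructor
  · rintro ⟨lam, hlam, hle⟩
    refine ⟨Sum.elim lam (x - ∑ i, lam i • g i), ?_, ?_⟩
    · rintro (i | ω)
      exacts [hlam i, sub_nonneg.mpr (hle ω)]
    · simp only [Sum.elim_inl, Sum.elim_inr, e, ← pi_eq_sum_univ, add_sub_cancel]
  · rintro ⟨c, hc, rfl⟩
    refine ⟨fun i => c (.inl i), fun i => hc _, le_add_of_nonneg_right ?_⟩
    exact sum_nonneg fun ω _ => smul_nonneg (hc _) fun ω' => by
      simp only [e, Pi.zero_apply]; split_ifs <;> norm_num

lemma isClosed_sellingPrices [Fintype Ω] (g : ι → Ω → ℝ) (f : Ω → ℝ) :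
    IsClosed (sellingPrices g f) := by
  convert (isClosed_setOf_exists_nonneg_sum_le g).preimage
    (show Continuous fun β : ℝ => fun ω => β - f ω by fun_prop) using 1
  ext β
  simp [sellingPrices, Pi.le_def]

variable {g : ι → Ω → ℝ}

lemma bddBelow_sellingPrices [Finite Ω] (hasl : AvoidsSureLoss g) (f : Ω → ℝ) :
    BddBelow (sellingPrices g f) := by
  obtain ⟨m, hm⟩ := (Set.finite_range f).bddBelow
  refine ⟨m, fun β ⟨lam, hlam, hle⟩ => ?_⟩
  obtain ⟨ω, hω⟩ := hasl lam hlam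
  linarith [hm (Set.mem_range_self ω), hle ω]

lemma exists_nonneg_forall_add_sum_neg
    (hasl : AvoidsSureLoss g) {f : Ω → ℝ} {lam₀ : ℝ} {lam : ι → ℝ} (hlam₀ : 0 ≤ lam₀)
    (hlam : ∀ i, 0 ≤ lam i)
    (hneg : ∀ ω, lam₀ * f ω + ∑ i, lam i * g i ω < 0) :
    ∃ lam' : ι → ℝ, (∀ i, 0 ≤ lam' i) ∧ ∀ ω, f ω + ∑ i, lam' i * g i ω < 0 := by
  have hpos : 0 < lam₀ := by
    refine hlam₀.lt_of_ne fun h => ?_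
    obtain ⟨ω, hω⟩ := hasl lam hlam
    linarith [hneg ω, h ▸ zero_mul (f ω)]
  refine ⟨fun i => lam i / lam₀, fun i => div_nonneg (hlam i) hpos.le, fun ω => ?_⟩
  have : f ω + ∑ i, lam i / lam₀ * g i ω = (lam₀ * f ω + ∑ i, lam i * g i ω) / lam₀ := by
    rw [add_div, sum_div, mul_div_cancel_left₀ _ hpos.ne']
    simp only [div_mul_eq_mul_div]
  rw [this]
  exact div_neg_of_neg_of_pos (hneg ω) hpos

end Gambles

section UpperExtension

variable {Ω : Type*} [Fintype Ω] {n : ℕ} {g : Fin n → Ω → ℝ} {f : Ω → ℝ}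

lemma upperExtD_le (hasl : AvoidsSureLoss g) {β : ℝ} (hβ : β ∈ sellingPrices g f) :
    upperExtD g f ≤ β :=
  csInf_le (bddBelow_sellingPrices hasl f) hβ

lemma upperExtD_mem_sellingPrices (hasl : AvoidsSureLoss g)
    (hne : (sellingPrices g f).Nonempty) :
    upperExtD g f ∈ sellingPrices g f :=
  (isClosed_sellingPrices g f).csInf_mem hne (bddBelow_sellingPrices hasl f)

end UpperExtension

/-- Theorem 2.6, second part: if the family extended with `f` does not avoid
sure loss, then some nonnegative combination `f + ∑ λᵢ gᵢ` loses at least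
`|Ē_D(f)|` in every outcome. -/
theorem sure_loss_combination_of_not_avoids
    {Ω : Type*} [Fintype Ω] [Nonempty Ω] (n : ℕ) (g : Fin n → Ω → ℝ)
    (hasl : ∀ lam : Fin n → ℝ, (∀ i, 0 ≤ lam i) →
      0 ≤ Finset.univ.sup' Finset.univ_nonempty
        (fun ω => ∑ i : Fin n, lam i * g i ω))
    (f : Ω → ℝ)
    (hnot : ¬ (∀ (lam0 : ℝ) (lam : Fin n → ℝ), 0 ≤ lam0 → (∀ i, 0 ≤ lam i) →
      0 ≤ Finset.univ.sup' Finset.univ_nonempty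
        (fun ω => lam0 * f ω + ∑ i : Fin n, lam i * g i ω))) :
    ∃ lam : Fin n → ℝ, (∀ i, 0 ≤ lam i) ∧
      (∀ ω : Ω, f ω + ∑ i : Fin n, lam i * g i ω ≤ upperExtD g f) ∧
      upperExtD g f < 0 := by
  have hasl' : AvoidsSureLoss g :=
    fun lam hlam => by simpa using (le_sup'_iff _).mp (hasl lam hlam)
  push Not at hnot
  obtain ⟨lam₀, lam, hlam₀, hlam, hneg⟩ := hnot
  obtain ⟨lam', hlam', hneg'⟩ :=
    exists_nonneg_forall_add_sum_neg hasl' hlam₀ hlam (by simpa using hneg)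
  obtain ⟨ω₀, hω₀⟩ := Finite.exists_max fun ω => f ω + ∑ i, lam' i * g i ω
  have hmem : f ω₀ + ∑ i, lam' i * g i ω₀ ∈ sellingPrices g f :=
    ⟨lam', hlam', fun ω => by linarith [hω₀ ω]⟩
  obtain ⟨lamE, hlamE, hlamE_le⟩ := upperExtD_mem_sellingPrices hasl' ⟨_, hmem⟩
  exact ⟨lamE, hlamE, fun ω => by linarith [hlamE_le ω],
    (upperExtD_le hasl' hmem).trans_lt (hneg' ω₀)⟩
end

section
/- Theorem 3.2 (avoiding sure loss for one bookmaker): Let Ω = {ω_1, …, ω_n} and, for each i, let a_i > 0 and b_i > 0 be given odds, with corresponding gambles g_i defined by g_i(ω) = −a_i if ω = ω_i and g_i(ω) = b_i otherwise. Then the family {g_1, …, g_n} avoids sure loss if and only if Σ_{i=1}^{n} b_i / (a_i + b_i) ≥ 1. -/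
/-- Theorem 3.2: the family of gambles corresponding to the odds `aᵢ/bᵢ` of a
single bookmaker avoids sure loss iff `∑ᵢ bᵢ/(aᵢ+bᵢ) ≥ 1`. -/
theorem one_bookmaker_avoids_sure_loss_iff
    {Ω : Type*} [Fintype Ω] [Nonempty Ω] [DecidableEq Ω]
    (n : ℕ) (e : Fin n ≃ Ω) (a b : Fin n → ℝ)
    (ha : ∀ i, 0 < a i) (hb : ∀ i, 0 < b i) :
    (∀ lam : Fin n → ℝ, (∀ i, 0 ≤ lam i) →
      0 ≤ Finset.univ.sup' Finset.univ_nonempty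
        (fun ω => ∑ i : Fin n, lam i * (if ω = e i then -(a i) else b i))) ↔
    1 ≤ ∑ i : Fin n, b i / (a i + b i) := by
  have hne : Nonempty (Fin n) := ⟨e.symm (Classical.arbitrary Ω)⟩
  have hab : ∀ i, 0 < a i + b i := fun i => add_pos (ha i) (hb i)
  have key : ∀ (lam : Fin n → ℝ) (j : Fin n),
      ∑ i : Fin n, lam i * (if e j = e i then -(a i) else b i)
        = (∑ i, lam i * b i) - lam j * (a j + b j) := by
    intro lam j
    have h1 : ∀ i ∈ Finset.univ, lam i * (if e j = e i then -(a i) else b i)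
        = lam i * b i - (if i = j then lam j * (a j + b j) else 0) := by
      intro i _
      by_cases h : i = j
      · subst h; simp; ring
      · have hne' : e j ≠ e i := fun hh => h (e.injective hh.symm)
        simp [hne', h]
    rw [Finset.sum_congr rfl h1, Finset.sum_sub_distrib,
      Finset.sum_ite_eq' Finset.univ j]
    simp
  constructor
  · intro H
    have h0 := H (fun i => (a i + b i)⁻¹) (fun i => le_of_lt (inv_pos.2 (hab i)))
    have hconst : ∀ ω : Ω,
        (∑ i : Fin n, (a i + b i)⁻¹ * (if ω = e i then -(a i) else b i))
          = (∑ i : Fin n, b i / (a i + b i)) - 1 := by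
      intro ω
      have hω : ω = e (e.symm ω) := (e.apply_symm_apply ω).symm
      rw [hω, key]
      have h2 : (∑ i : Fin n, (a i + b i)⁻¹ * b i)
          = ∑ i : Fin n, b i / (a i + b i) :=
        Finset.sum_congr rfl fun i _ => by rw [div_eq_mul_inv, mul_comm]
      rw [h2, inv_mul_cancel₀ (hab (e.symm ω)).ne']
    have hle : Finset.univ.sup' Finset.univ_nonempty
        (fun ω => ∑ i : Fin n, (a i + b i)⁻¹ * (if ω = e i then -(a i) else b i))
          ≤ (∑ i : Fin n, b i / (a i + b i)) - 1 :=
      Finset.sup'_le _ _ fun ω _ => le_of_eq (hconst ω)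
    linarith [le_trans h0 hle]
  · intro hS lam hlam
    by_contra hcon
    push_neg at hcon
    set S := ∑ i, lam i * b i with hSdef
    have hSnn : 0 ≤ S := Finset.sum_nonneg fun i _ =>
      mul_nonneg (hlam i) (hb i).le
    have hlt : ∀ j : Fin n, S < lam j * (a j + b j) := by
      intro j
      have := Finset.le_sup' (f := fun ω => ∑ i : Fin n,
        lam i * (if ω = e i then -(a i) else b i)) (Finset.mem_univ (e j))
      have hval := key lam j
      rw [hval] at this
      linarith [lt_of_le_of_lt this hcon]
    have hstrict : ∑ j : Fin n, S * (b j / (a j + b j)) < ∑ j, lam j * b j := by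
      apply Finset.sum_lt_sum_of_nonempty Finset.univ_nonempty
      intro j _
      have hpos : 0 < b j / (a j + b j) := div_pos (hb j) (hab j)
      have := (mul_lt_mul_of_pos_right (hlt j) hpos)
      calc S * (b j / (a j + b j)) < lam j * (a j + b j) * (b j / (a j + b j)) := this
        _ = lam j * b j := by
            have hcancel : (a j + b j) * (b j / (a j + b j)) = b j := by
              rw [mul_comm, div_mul_cancel₀ _ (hab j).ne']
            rw [mul_assoc, hcancel]
    rw [← Finset.mul_sum] at hstrict
    nlinarith
end

section
/- Theorem 3.4 (avoiding sure loss for multiple bookmakers): Let Ω = {ω_1, …, ω_n} and suppose there are m bookmakers. For each i ∈ {1, …, n} and k ∈ {1, …, m}, let a_{ik} > 0 and b_{ik} > 0 be the odds of bookmaker k on ω_i, with corresponding gamble g_{ik} defined by g_{ik}(ω) = −a_{ik} if ω = ω_i and g_{ik}(ω) = b_{ik} otherwise. Then the family { g_{ik} : 1 ≤ i ≤ n, 1 ≤ k ≤ m } avoids sure loss if and only if Σ_{i=1}^{n} min_{1 ≤ k ≤ m} b_{ik} / (a_{ik} + b_{ik}) ≥ 1 (equivalently, Σ_{i=1}^{n}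 b_i* / (a_i* + b_i*) ≥ 1, where a_i*/b_i* = max_{k} a_{ik}/b_{ik} is the maximal odds ratio on ω_i). -/
/-- Theorem 3.4: the family of gambles corresponding to the odds `a_{ik}/b_{ik}`
of `m` bookmakers avoids sure loss iff
`∑ᵢ minₖ b_{ik}/(a_{ik}+b_{ik}) ≥ 1`. -/
theorem multiple_bookmakers_avoids_sure_loss_iff
    {Ω : Type*} [Fintype Ω] [Nonempty Ω] [DecidableEq Ω]
    (n m : ℕ) (hm : 0 < m) (e : Fin n ≃ Ω)
    (a b : Fin n → Fin m → ℝ)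
    (ha : ∀ i k, 0 < a i k) (hb : ∀ i k, 0 < b i k) :
    (∀ lam : Fin n → Fin m → ℝ, (∀ i k, 0 ≤ lam i k) →
      0 ≤ Finset.univ.sup' Finset.univ_nonempty
        (fun ω => ∑ i : Fin n, ∑ k : Fin m,
          lam i k * (if ω = e i then -(a i k) else b i k))) ↔
    1 ≤ ∑ i : Fin n,
      Finset.univ.inf'
        (Finset.univ_nonempty_iff.mpr (Fin.pos_iff_nonempty.mp hm))
        (fun k => b i k / (a i k + b i k)) := by
  classical
  have hFn : Nonempty (Fin n) := Nonempty.map e.symm inferInstance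
  set c : Fin n → ℝ := fun i =>
      Finset.univ.inf' (Finset.univ_nonempty_iff.mpr (Fin.pos_iff_nonempty.mp hm))
        (fun k => b i k / (a i k + b i k)) with hc
  have hab : ∀ i k, 0 < a i k + b i k := fun i k => add_pos (ha i k) (hb i k)
  have hcle : ∀ i k, c i ≤ b i k / (a i k + b i k) := fun i k =>
    Finset.inf'_le _ (Finset.mem_univ k)
  have hcpos : ∀ i, 0 < c i := fun i => by
    rw [hc]
    rw [Finset.lt_inf'_iff]
    exact fun k _ => div_pos (hb i k) (hab i k)
  have key : ∀ (lam : Fin n → Fin m → ℝ) (j : Fin n),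
      (∑ i : Fin n, ∑ k : Fin m, lam i k * (if e j = e i then -(a i k) else b i k))
        = (∑ i : Fin n, ∑ k : Fin m, lam i k * b i k)
          - ∑ k : Fin m, lam j k * (a j k + b j k) := by
    intro lam j
    have h1 : ∀ i : Fin n,
        (∑ k : Fin m, lam i k * (if e j = e i then -(a i k) else b i k))
          = (∑ k : Fin m, lam i k * b i k)
            - (if i = j then ∑ k : Fin m, lam j k * (a j k + b j k) else 0) := by
      intro i
      by_cases h : i = j
      · subst h
        simp only [if_pos rfl, if_true, eq_self_iff_true]
        rw [← Finset.sum_sub_distrib]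
        exact Finset.sum_congr rfl fun k _ => by ring
      · have hne : e j ≠ e i := fun hh => h (e.injective hh).symm
        simp [hne, h]
    rw [Finset.sum_congr rfl fun i _ => h1 i, Finset.sum_sub_distrib,
      Finset.sum_ite_eq' Finset.univ j]
    simp
  constructor
  · -- ASL → sum ≥ 1
    intro hasl
    by_contra hlt
    push_neg at hlt
    choose K hKspec using fun i =>
      Finset.exists_mem_eq_inf' (α := ℝ)
        (Finset.univ_nonempty_iff.mpr (Fin.pos_iff_nonempty.mp hm))
        (fun k => b i k / (a i k + b i k))
    set lam : Fin n → Fin m → ℝ := fun i k =>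
      if k = K i then (a i (K i) + b i (K i))⁻¹ else 0 with hlam
    have hlam0 : ∀ i k, 0 ≤ lam i k := by
      intro i k
      rw [hlam]
      dsimp only
      split
      · exact inv_nonneg.mpr (hab i (K i)).le
      · exact le_refl 0
    have hsum : ∀ (i : Fin n) (x : Fin m → ℝ),
        (∑ k : Fin m, lam i k * x k) = (a i (K i) + b i (K i))⁻¹ * x (K i) := by
      intro i x
      rw [hlam]
      simp [ite_mul, zero_mul]
    have hFval : ∀ j : Fin n,
        (∑ i : Fin n, ∑ k : Fin m, lam i k * (if e j = e i then -(a i k) else b i k))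
          = (∑ i : Fin n, c i) - 1 := by
      intro j
      rw [key lam j]
      have hB : (∑ i : Fin n, ∑ k : Fin m, lam i k * b i k) = ∑ i : Fin n, c i := by
        refine Finset.sum_congr rfl fun i _ => ?_
        rw [hsum i, inv_mul_eq_div]
        exact ((hKspec i).2).symm
      have hA : (∑ k : Fin m, lam j k * (a j k + b j k)) = 1 := by
        rw [hsum j]
        exact inv_mul_cancel₀ (hab j (K j)).ne'
      rw [hB, hA]
    have hsup := hasl lam hlam0
    have hneg : Finset.univ.sup' Finset.univ_nonempty
        (fun ω => ∑ i : Fin n, ∑ k : Fin m,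
          lam i k * (if ω = e i then -(a i k) else b i k)) < 0 := by
      rw [Finset.sup'_lt_iff]
      intro ω _
      have hω : ω = e (e.symm ω) := (e.apply_symm_apply ω).symm
      rw [hω, hFval (e.symm ω)]
      linarith
    linarith
  · -- sum ≥ 1 → ASL
    intro hsum lam hlam0
    set A : Fin n → ℝ := fun j => ∑ k : Fin m, lam j k * (a j k + b j k) with hA
    obtain ⟨j0, _, hj0⟩ := Finset.exists_min_image Finset.univ A Finset.univ_nonempty
    have hA0 : 0 ≤ A j0 := by
      rw [hA]
      exact Finset.sum_nonneg fun k _ =>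
        mul_nonneg (hlam0 j0 k) (hab j0 k).le
    have hB : ∑ i : Fin n, c i * A i ≤ ∑ i : Fin n, ∑ k : Fin m, lam i k * b i k := by
      refine Finset.sum_le_sum fun i _ => ?_
      rw [hA, Finset.mul_sum]
      refine Finset.sum_le_sum fun k _ => ?_
      have h1 : c i * (lam i k * (a i k + b i k))
          ≤ (b i k / (a i k + b i k)) * (lam i k * (a i k + b i k)) :=
        mul_le_mul_of_nonneg_right (hcle i k)
          (mul_nonneg (hlam0 i k) (hab i k).le)
      calc c i * (lam i k * (a i k + b i k))
          ≤ (b i k / (a i k + b i k)) * (lam i k * (a i k + b i k)) := h1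
        _ = lam i k * b i k := by
            rw [mul_comm (lam i k) (a i k + b i k), ← mul_assoc,
              div_mul_cancel₀ _ (hab i k).ne', mul_comm]
    have hchain : A j0 ≤ ∑ i : Fin n, ∑ k : Fin m, lam i k * b i k := by
      calc A j0 = 1 * A j0 := (one_mul _).symm
        _ ≤ (∑ i : Fin n, c i) * A j0 := mul_le_mul_of_nonneg_right hsum hA0
        _ = ∑ i : Fin n, c i * A j0 := by rw [Finset.sum_mul]
        _ ≤ ∑ i : Fin n, c i * A i :=
            Finset.sum_le_sum fun i _ =>
              mul_le_mul_of_nonneg_left (hj0 i (Finset.mem_univ i)) (hcpos i).le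
        _ ≤ _ := hB
    have hle : (0:ℝ) ≤ ∑ i : Fin n, ∑ k : Fin m,
        lam i k * (if e j0 = e i then -(a i k) else b i k) := by
      rw [key lam j0]
      rw [hA] at hchain
      linarith
    calc (0:ℝ) ≤ _ := hle
      _ ≤ _ := Finset.le_sup' (f := fun ω => ∑ i : Fin n, ∑ k : Fin m,
          lam i k * (if ω = e i then -(a i k) else b i k)) (Finset.mem_univ (e j0))
end

section
/- Theorem 4.1, level-set equality (equation (4.8)): Let Ω = {ω_1, …, ω_n} with Σ_{j=1}^{n} p̄(ω_j) ≥ 1, let f be a gamble such that f(ω_1) ≥ f(ω_2) ≥ ⋯ ≥ f(ω_n) (the enumeration lists outcomes by descending level sets of f), let k be the smallest index such that Σ_{j=1}^{k} p̄(ω_j) ≥ 1, and define p by p(ω_i) = p̄(ω_i) if i < k, p(ω_k) = 1 − Σ_{j=1}^{k−1} p̄(ω_j), and p(ω_i) = 0 if i > k. Then for every nonempty upper level set A = { ω ∈ Ω : f(ω) ≥ c } of f, one has min{ Σ_{ω ∈ A} p̄(ω), 1 } = Σ_{ω ∈ A} p(ω). -/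
/-! Since `f` decreases along the enumeration `e`, every nonempty upper level set of `f` is an
initial segment `{ω_1, …, ω_m}`. Below the cutoff index `k` the mass function `p` agrees with
`p̄` and the partial sums of `p̄` stay below `1`; from `k` on, the partial sums of `p̄` are at
least `1`, while those of `p` telescope to exactly `1`. -/

open Finset

theorem Antitone.filter_le_eq_Iic {ι β : Type*} [LinearOrder ι] [Fintype ι]
    [LocallyFiniteOrderBot ι] [Preorder β] [DecidableLE β] {g : ι → β} (hg : Antitone g)
    {c : β} (hne : (univ.filter fun i => c ≤ g i).Nonempty) :
    ∃ m, univ.filter (fun i => c ≤ g i) = Iic m := by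
  set m := (univ.filter fun i => c ≤ g i).max' hne
  have hm : c ≤ g m := (mem_filter.1 (max'_mem _ hne)).2
  refine ⟨m, ext fun i => ⟨fun hi => mem_Iic.2 (le_max' _ i hi), fun hi => ?_⟩⟩
  exact mem_filter.2 ⟨mem_univ i, hm.trans (hg (mem_Iic.1 hi))⟩

theorem Equiv.sum_filter_comp {ι Ω M : Type*} [Fintype ι] [Fintype Ω] [AddCommMonoid M]
    (e : ι ≃ Ω) (P : Ω → Prop) [DecidablePred P] (g : Ω → M) :
    ∑ ω ∈ univ.filter P, g ω = ∑ i ∈ univ.filter (fun i => P (e i)), g (e i) := by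
  rw [sum_filter, sum_filter]
  exact (e.sum_comp fun ω => if P ω then g ω else 0).symm

section Truncation

variable {ι : Type*} [LinearOrder ι] [LocallyFiniteOrderBot ι] {a b : ι → ℝ} {k m : ι}

theorem sum_Iic_truncation_of_lt (hb : ∀ i, b i =
      if i < k then a i else if i = k then 1 - ∑ j ∈ Iio k, a j else 0)
    (hm : m < k) : ∑ i ∈ Iic m, b i = ∑ i ∈ Iic m, a i :=
  sum_congr rfl fun i hi => by rw [hb i, if_pos ((mem_Iic.1 hi).trans_lt hm)]

theorem sum_Iic_truncation_of_le (hb : ∀ i, b i =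
      if i < k then a i else if i = k then 1 - ∑ j ∈ Iio k, a j else 0)
    (hm : k ≤ m) : ∑ i ∈ Iic m, b i = 1 := by
  have hvanish : ∑ i ∈ Iic m, b i = ∑ i ∈ Iic k, b i := by
    refine (sum_subset (Iic_subset_Iic.2 hm) fun i _ hik => ?_).symm
    have hki : k < i := not_le.1 (mt mem_Iic.2 hik)
    rw [hb i, if_neg hki.not_gt, if_neg hki.ne']
  have hhead : ∑ i ∈ Iio k, b i = ∑ i ∈ Iio k, a i :=
    sum_congr rfl fun i hi => by rw [hb i, if_pos (mem_Iio.1 hi)]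
  rw [hvanish, ← Iio_insert, sum_insert notMem_Iio_self, hhead, hb k, if_neg (lt_irrefl k),
    if_pos rfl]
  ring

theorem sum_Iic_truncation_eq_min (ha : ∀ i, 0 ≤ a i) (hk : 1 ≤ ∑ j ∈ Iic k, a j)
    (hkmin : ∀ j, j < k → ∑ i ∈ Iic j, a i < 1)
    (hb : ∀ i, b i =
      if i < k then a i else if i = k then 1 - ∑ j ∈ Iio k, a j else 0) (m : ι) :
    min (∑ i ∈ Iic m, a i) 1 = ∑ i ∈ Iic m, b i := by
  rcases lt_or_ge m k with hm | hm
  · rw [min_eq_left (hkmin m hm).le, sum_Iic_truncation_of_lt hb hm]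
  · have hge : 1 ≤ ∑ i ∈ Iic m, a i :=
      hk.trans (sum_le_sum_of_subset_of_nonneg (Iic_subset_Iic.2 hm) fun i _ _ => ha i)
    rw [min_eq_right hge, sum_Iic_truncation_of_le hb hm]

end Truncation

theorem algorithm_p_level_set_equality_general
    {Ω : Type*} [Fintype Ω]
    (n : ℕ) (e : Fin n ≃ Ω)
    (pbar : Ω → ℝ) (hpbar : ∀ ω, 0 ≤ pbar ω ∧ pbar ω ≤ 1)
    (f : Ω → ℝ)
    (hmono : ∀ i j : Fin n, i ≤ j → f (e j) ≤ f (e i))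
    (k : Fin n)
    (hk : 1 ≤ ∑ j ∈ Finset.Iic k, pbar (e j))
    (hkmin : ∀ j : Fin n, j < k → ∑ i ∈ Finset.Iic j, pbar (e i) < 1)
    (p : Ω → ℝ)
    (hpdef : ∀ i : Fin n, p (e i) =
      if i < k then pbar (e i)
      else if i = k then 1 - ∑ j ∈ Finset.Iio k, pbar (e j)
      else 0) :
    ∀ c : ℝ, (Finset.univ.filter (fun ω => c ≤ f ω)).Nonempty →
      min (∑ ω ∈ Finset.univ.filter (fun ω => c ≤ f ω), pbar ω) 1 =
        ∑ ω ∈ Finset.univ.filter (fun ω => c ≤ f ω), p ω := by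
  intro c hA
  have hne : (univ.filter fun i => c ≤ f (e i)).Nonempty := by
    obtain ⟨ω, hω⟩ := hA
    exact ⟨e.symm ω, by simpa using hω⟩
  obtain ⟨m, hm⟩ := Antitone.filter_le_eq_Iic (g := f ∘ e) hmono hne
  rw [e.sum_filter_comp, e.sum_filter_comp]
  simp only [Function.comp_apply] at hm
  rw [hm]
  exact sum_Iic_truncation_eq_min (fun i => (hpbar (e i)).1) hk hkmin hpdef m

/-- Theorem 4.1, level-set equality (eq. (4.8)): for the probability mass
function `p` constructed by Algorithm 1, every nonempty upper level set `A`
of `f` satisfies `min {∑_{ω ∈ A} pbar ω, 1} = ∑_{ω ∈ A} p ω`. -/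
theorem algorithm_p_level_set_equality
    {Ω : Type*} [Fintype Ω] [DecidableEq Ω]
    (n : ℕ) (e : Fin n ≃ Ω)
    (pbar : Ω → ℝ) (hpbar : ∀ ω, 0 ≤ pbar ω ∧ pbar ω ≤ 1)
    (hasl : 1 ≤ ∑ ω : Ω, pbar ω)
    (f : Ω → ℝ)
    (hmono : ∀ i j : Fin n, i ≤ j → f (e j) ≤ f (e i))
    (k : Fin n)
    (hk : 1 ≤ ∑ j ∈ Finset.Iic k, pbar (e j))
    (hkmin : ∀ j : Fin n, j < k → ∑ i ∈ Finset.Iic j, pbar (e i) < 1)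
    (p : Ω → ℝ)
    (hpdef : ∀ i : Fin n, p (e i) =
      if i < k then pbar (e i)
      else if i = k then 1 - ∑ j ∈ Finset.Iio k, pbar (e j)
      else 0) :
    ∀ c : ℝ, (Finset.univ.filter (fun ω => c ≤ f ω)).Nonempty →
      min (∑ ω ∈ Finset.univ.filter (fun ω => c ≤ f ω), pbar ω) 1 =
        ∑ ω ∈ Finset.univ.filter (fun ω => c ≤ f ω), p ω :=
  algorithm_p_level_set_equality_general n e pbar hpbar f hmono k hk hkmin p hpdef
end

section
/- Theorem 4.1, optimality part: Let Ω = {ω_1, …, ω_n} with Σ_{j=1}^{n} p̄(ω_j) ≥ 1, let f be a gamble such that f(ω_1) ≥ f(ω_2) ≥ ⋯ ≥ f(ω_n), let k be the smallest index such that Σ_{j=1}^{k} p̄(ω_j) ≥ 1, and define p by p(ω_i) = p̄(ω_i) if i < k, p(ω_k) = 1 − Σ_{j=1}^{k−1} p̄(ω_j), and p(ω_i) = 0 if i > k. Then the expectation of f under p equals the upper natural extension of f: Σ_{ω ∈ Ω} f(ω) p(ω) = Ē_{p̄}(f). -/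
open Finset

section UpperExt

variable {Ω : Type*} [Fintype Ω] [DecidableEq Ω]

theorem sum_mul_sub_indicator (lam pbar : Ω → ℝ) (ω' : Ω) :
    ∑ ω, lam ω * (pbar ω - if ω' = ω then 1 else 0) = ∑ ω, lam ω * pbar ω - lam ω' := by
  simp only [mul_sub, mul_ite, mul_one, mul_zero, sum_sub_distrib, sum_ite_eq, mem_univ,
    if_true]

theorem sum_mul_le_of_feasible_s15 {pbar f p lam : Ω → ℝ} {β : ℝ}
    (hp0 : ∀ ω, 0 ≤ p ω) (hp : ∀ ω, p ω ≤ pbar ω) (hp1 : ∑ ω, p ω = 1)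
    (hlam : ∀ ω, 0 ≤ lam ω)
    (hβ : ∀ ω', ∑ ω, lam ω * (pbar ω - if ω' = ω then 1 else 0) ≤ β - f ω') :
    ∑ ω, f ω * p ω ≤ β := by
  set T := ∑ ω, lam ω * pbar ω
  have hlamp : ∑ ω, lam ω * p ω ≤ T :=
    sum_le_sum fun ω _ => mul_le_mul_of_nonneg_left (hp ω) (hlam ω)
  calc ∑ ω, f ω * p ω ≤ ∑ ω, (β - T + lam ω) * p ω := by
        refine sum_le_sum fun ω _ => mul_le_mul_of_nonneg_right ?_ (hp0 ω)
        linarith [hβ ω, sum_mul_sub_indicator lam pbar ω]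
    _ = β - T + ∑ ω, lam ω * p ω := by
        simp only [add_mul, sum_add_distrib, ← mul_sum, hp1, mul_one]
    _ ≤ β := by linarith

theorem upperExt_eq_sum_mul_of_slackness {pbar f p : Ω → ℝ} (c : ℝ)
    (hp0 : ∀ ω, 0 ≤ p ω) (hp : ∀ ω, p ω ≤ pbar ω) (hp1 : ∑ ω, p ω = 1)
    (hslack : ∀ ω, p ω < pbar ω → f ω ≤ c) (hsupp : ∀ ω, 0 < p ω → c ≤ f ω) :
    upperExt pbar f = ∑ ω, f ω * p ω := by
  set lam : Ω → ℝ := fun ω => max (f ω - c) 0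
  have hlam : ∀ ω, 0 ≤ lam ω := fun ω => le_max_right _ _
  have hlam_pbar : ∑ ω, lam ω * pbar ω = ∑ ω, lam ω * p ω := by
    refine sum_congr rfl fun ω _ => ?_
    rcases le_or_gt (f ω) c with hfc | hcf
    · simp [lam, hfc]
    · rw [le_antisymm (hp ω) (not_lt.mp fun h => (hslack ω h).not_gt hcf)]
  have hexp : ∑ ω, f ω * p ω = c + ∑ ω, lam ω * p ω := by
    rw [← mul_one c, ← hp1, mul_sum, ← sum_add_distrib]
    refine sum_congr rfl fun ω _ => ?_
    rcases (hp0 ω).eq_or_lt with h0 | hpos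
    · simp [← h0]
    · rw [show lam ω = f ω - c from max_eq_left (sub_nonneg.mpr (hsupp ω hpos))]
      ring
  have hfeasible : ∀ ω', ∑ ω, lam ω * (pbar ω - if ω' = ω then 1 else 0)
      ≤ ∑ ω, f ω * p ω - f ω' := by
    intro ω'
    rw [sum_mul_sub_indicator, hlam_pbar, hexp]
    linarith [le_max_left (f ω' - c) 0]
  refine le_antisymm (csInf_le ⟨∑ ω, f ω * p ω, ?_⟩ ⟨lam, hlam, hfeasible⟩)
    (le_csInf ⟨∑ ω, f ω * p ω, lam, hlam, hfeasible⟩ ?_)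
  all_goals
    rintro β ⟨l, hl, hβ⟩
    exact sum_mul_le_of_feasible_s15 hp0 hp hp1 hl hβ

end UpperExt

section Greedy

variable {ι : Type*} [LinearOrder ι] [LocallyFiniteOrderBot ι]

theorem sum_Iio_lt_of_forall_sum_Iic_lt [PredOrder ι] {a : ι → ℝ} {k : ι} {t : ℝ}
    (ht : 0 < t) (h : ∀ j < k, ∑ i ∈ Iic j, a i < t) : ∑ i ∈ Iio k, a i < t := by
  by_cases hk : IsMin k
  · simpa [Iio_eq_empty.mpr hk] using ht
  · rw [← Iic_pred_eq_Iio_of_not_isMin hk]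
    exact h _ (Order.pred_lt_of_not_isMin hk)

/-- The probability mass function `p` built by Algorithm 1. -/
def greedyMass (a : ι → ℝ) (k i : ι) : ℝ :=
  if i < k then a i else if i = k then 1 - ∑ j ∈ Iio k, a j else 0

variable {a : ι → ℝ} {k : ι}

theorem greedyMass_of_lt {i : ι} (h : i < k) : greedyMass a k i = a i := if_pos h

theorem greedyMass_of_gt {i : ι} (h : k < i) : greedyMass a k i = 0 := by
  rw [greedyMass, if_neg h.not_gt, if_neg h.ne']

theorem sum_greedyMass [Fintype ι] : ∑ i, greedyMass a k i = 1 := by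
  simp only [greedyMass]
  rw [sum_ite, filter_gt_eq_Iio, sum_ite_eq', if_pos (by simp)]
  ring

theorem greedyMass_nonneg (ha : ∀ i, 0 ≤ a i) (hS : ∑ j ∈ Iio k, a j ≤ 1) (i : ι) :
    0 ≤ greedyMass a k i := by
  unfold greedyMass
  split_ifs
  exacts [ha i, sub_nonneg.mpr hS, le_rfl]

theorem greedyMass_le (ha : ∀ i, 0 ≤ a i) (hk : 1 ≤ ∑ j ∈ Iic k, a j) (i : ι) :
    greedyMass a k i ≤ a i := by
  unfold greedyMass
  split_ifs with hik hik'
  · exact le_rfl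
  · rw [← Iio_insert, sum_insert (by simp)] at hk
    subst hik'
    linarith
  · exact ha i

end Greedy

theorem algorithm_p_is_optimal_general
    {Ω : Type*} [Fintype Ω] [DecidableEq Ω]
    (n : ℕ) (e : Fin n ≃ Ω)
    (pbar : Ω → ℝ) (hpbar : ∀ ω, 0 ≤ pbar ω ∧ pbar ω ≤ 1)
    (f : Ω → ℝ)
    (hmono : ∀ i j : Fin n, i ≤ j → f (e j) ≤ f (e i))
    (k : Fin n)
    (hk : 1 ≤ ∑ j ∈ Finset.Iic k, pbar (e j))
    (hkmin : ∀ j : Fin n, j < k → ∑ i ∈ Finset.Iic j, pbar (e i) < 1)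
    (p : Ω → ℝ)
    (hpdef : ∀ i : Fin n, p (e i) =
      if i < k then pbar (e i)
      else if i = k then 1 - ∑ j ∈ Finset.Iio k, pbar (e j)
      else 0) :
    ∑ ω : Ω, f ω * p ω = upperExt pbar f := by
  have hp : ∀ i, p (e i) = greedyMass (fun j => pbar (e j)) k i := hpdef
  have ha : ∀ i, 0 ≤ pbar (e i) := fun i => (hpbar (e i)).1
  have hS : ∑ j ∈ Iio k, pbar (e j) < 1 := sum_Iio_lt_of_forall_sum_Iic_lt one_pos hkmin
  refine (upperExt_eq_sum_mul_of_slackness (f (e k)) ?_ ?_ ?_ ?_ ?_).symm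
  · exact e.forall_congr_right.mp fun i => hp i ▸ greedyMass_nonneg ha hS.le i
  · exact e.forall_congr_right.mp fun i => hp i ▸ greedyMass_le ha hk i
  · rw [← e.sum_comp, Fintype.sum_congr _ _ hp]
    exact sum_greedyMass
  · refine e.forall_congr_right.mp fun i hlt => hmono k i (not_lt.mp fun hik => ?_)
    exact hlt.ne (by rw [hp, greedyMass_of_lt hik])
  · refine e.forall_congr_right.mp fun i hpos => hmono i k (not_lt.mp fun hki => ?_)
    exact hpos.ne' (by rw [hp, greedyMass_of_gt hki])

/-- Theorem 4.1, optimality part: the expectation of `f` under the probability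
mass function `p` constructed by Algorithm 1 equals the upper natural
extension `Ē(f)`. -/
theorem algorithm_p_is_optimal
    {Ω : Type*} [Fintype Ω] [DecidableEq Ω]
    (n : ℕ) (e : Fin n ≃ Ω)
    (pbar : Ω → ℝ) (hpbar : ∀ ω, 0 ≤ pbar ω ∧ pbar ω ≤ 1)
    (hasl : 1 ≤ ∑ ω : Ω, pbar ω)
    (f : Ω → ℝ)
    (hmono : ∀ i j : Fin n, i ≤ j → f (e j) ≤ f (e i))
    (k : Fin n)
    (hk : 1 ≤ ∑ j ∈ Finset.Iic k, pbar (e j))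
    (hkmin : ∀ j : Fin n, j < k → ∑ i ∈ Finset.Iic j, pbar (e i) < 1)
    (p : Ω → ℝ)
    (hpdef : ∀ i : Fin n, p (e i) =
      if i < k then pbar (e i)
      else if i = k then 1 - ∑ j ∈ Finset.Iio k, pbar (e j)
      else 0) :
    ∑ ω : Ω, f ω * p ω = upperExt pbar f :=
  algorithm_p_is_optimal_general n e pbar hpbar f hmono k hk hkmin p hpdef
end

section
/- Duality attainment for upper probability mass functions (consequence of Theorem 4.1): Suppose the upper probability mass function p̄ satisfies Σ_{ω ∈ Ω} p̄(ω) ≥ 1. Then for every gamble f there exists a probability mass function p on Ω with p(ω) ≤ p̄(ω) for all ω ∈ Ω such that Σ_{ω ∈ Ω} f(ω) p(ω) = Ē_{p̄}(f). -/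
/-- Duality attainment: if `∑ ω, pbar ω ≥ 1`, then for every gamble `f` there
is a probability mass function `p` dominated by `pbar` whose expectation of
`f` equals the upper natural extension `Ē(f)`. -/
theorem exists_pmf_expectation_eq_upperExt
    {Ω : Type*} [Fintype Ω] [Nonempty Ω] [DecidableEq Ω]
    (pbar : Ω → ℝ) (hpbar : ∀ ω, 0 ≤ pbar ω ∧ pbar ω ≤ 1)
    (hasl : 1 ≤ ∑ ω : Ω, pbar ω) (f : Ω → ℝ) :
    ∃ p : Ω → ℝ, (∀ ω, 0 ≤ p ω) ∧ (∑ ω : Ω, p ω = 1) ∧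
      (∀ ω, p ω ≤ pbar ω) ∧ ∑ ω : Ω, f ω * p ω = upperExt pbar f := by
  classical
  -- the finite set of values of f
  have hVne : (Finset.univ.image f).Nonempty :=
    ⟨f (Classical.arbitrary Ω), Finset.mem_image_of_mem f (Finset.mem_univ _)⟩
  -- candidates: values v with tail mass ≥ 1
  set W : Finset ℝ := (Finset.univ.image f).filter
      (fun v => 1 ≤ ∑ ω ∈ Finset.univ.filter (fun ω => v ≤ f ω), pbar ω) with hWdef
  have hWne : W.Nonempty := by
    refine ⟨(Finset.univ.image f).min' hVne, Finset.mem_filter.2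
      ⟨(Finset.univ.image f).min'_mem hVne, ?_⟩⟩
    have hfil : Finset.univ.filter
        (fun ω => (Finset.univ.image f).min' hVne ≤ f ω) = Finset.univ := by
      refine Finset.filter_true_of_mem fun ω _ => ?_
      exact (Finset.univ.image f).min'_le _ (Finset.mem_image_of_mem f (Finset.mem_univ ω))
    rw [hfil]; exact hasl
  set μ : ℝ := W.max' hWne with hμdef
  set SA : Finset Ω := Finset.univ.filter (fun ω => μ < f ω) with hSAdef
  set SE : Finset Ω := Finset.univ.filter (fun ω => f ω = μ) with hSEdef
  set A : ℝ := ∑ ω ∈ SA, pbar ω with hAdef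
  set s : ℝ := ∑ ω ∈ SE, pbar ω with hsdef
  -- 1 ≤ A + s
  have hμW : μ ∈ W := W.max'_mem hWne
  have hμtail : 1 ≤ ∑ ω ∈ Finset.univ.filter (fun ω => μ ≤ f ω), pbar ω :=
    (Finset.mem_filter.1 hμW).2
  have hsplit : Finset.univ.filter (fun ω => μ ≤ f ω) = SA ∪ SE := by
    ext ω
    simp only [hSAdef, hSEdef, Finset.mem_filter, Finset.mem_union, Finset.mem_univ, true_and]
    constructor
    · intro h
      rcases lt_or_eq_of_le h with h' | h'
      · exact Or.inl h'
      · exact Or.inr h'.symm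
    · rintro (h | h)
      · exact h.le
      · exact h.ge
  have hdisj : Disjoint SA SE := by
    rw [Finset.disjoint_left]
    intro ω h1 h2
    rw [hSAdef, Finset.mem_filter] at h1
    rw [hSEdef, Finset.mem_filter] at h2
    exact absurd (h2.2 ▸ h1.2) (lt_irrefl μ)
  have h1As : 1 ≤ A + s := by
    rw [hsplit, Finset.sum_union hdisj] at hμtail
    exact hμtail
  -- A < 1
  have hA1 : A < 1 := by
    rcases SA.eq_empty_or_nonempty with he | hne
    · rw [hAdef, he, Finset.sum_empty]; norm_num
    · set v' : ℝ := SA.inf' hne f with hv'def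
      have hμv' : μ < v' := by
        rw [hv'def, Finset.lt_inf'_iff]
        intro ω hω
        exact (Finset.mem_filter.1 hω).2
      have hfil : Finset.univ.filter (fun ω => v' ≤ f ω) = SA := by
        ext ω
        simp only [hSAdef, Finset.mem_filter, Finset.mem_univ, true_and]
        constructor
        · intro h; exact lt_of_lt_of_le hμv' h
        · intro h; exact Finset.inf'_le f (by rw [hSAdef]; simpa using h)
      have hv'V : v' ∈ Finset.univ.image f := by
        obtain ⟨ω₀, _, hω₀⟩ := Finset.exists_mem_eq_inf' hne f
        rw [hv'def, hω₀]
        exact Finset.mem_image_of_mem f (Finset.mem_univ ω₀)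
      have hv'notW : v' ∉ W := fun h => absurd (W.le_max' v' h) (not_le.2 hμv')
      have : ¬ (1 ≤ ∑ ω ∈ Finset.univ.filter (fun ω => v' ≤ f ω), pbar ω) := by
        intro h
        exact hv'notW (Finset.mem_filter.2 ⟨hv'V, h⟩)
      rw [hfil] at this
      linarith [not_le.1 this]
  set r : ℝ := 1 - A with hrdef
  have hr : 0 < r := by rw [hrdef]; linarith
  have hrs : r ≤ s := by rw [hrdef]; linarith
  have hs : 0 < s := lt_of_lt_of_le hr hrs
  -- the primal solution
  set p : Ω → ℝ := fun ω => if μ < f ω then pbar ω else if f ω = μ then pbar ω * (r / s) else 0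
    with hpdef
  have hp0 : ∀ ω, 0 ≤ p ω := by
    intro ω
    simp only [hpdef]
    split_ifs
    · exact (hpbar ω).1
    · exact mul_nonneg (hpbar ω).1 (div_nonneg hr.le hs.le)
    · exact le_refl 0
  have hrs1 : r / s ≤ 1 := (div_le_one hs).2 hrs
  have hple : ∀ ω, p ω ≤ pbar ω := by
    intro ω
    simp only [hpdef]
    split_ifs
    · exact le_refl _
    · exact mul_le_of_le_one_right (hpbar ω).1 hrs1
    · exact (hpbar ω).1
  -- sums split into three pieces
  have hSEsum : ∀ g : Ω → ℝ,
      (∑ ω ∈ (Finset.univ.filter (fun ω => ¬ μ < f ω)).filter (fun ω => f ω = μ), g ω)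
        = ∑ ω ∈ SE, g ω := by
    intro g
    congr 1
    ext ω
    simp only [hSEdef, Finset.mem_filter, Finset.mem_univ, true_and]
    constructor
    · rintro ⟨_, h⟩; exact h
    · intro h; exact ⟨by rw [h]; exact lt_irrefl μ, h⟩
  have hsumsplit : ∀ g : Ω → ℝ, (∑ ω : Ω, g ω) =
      (∑ ω ∈ SA, g ω) + ((∑ ω ∈ SE, g ω) +
        ∑ ω ∈ (Finset.univ.filter (fun ω => ¬ μ < f ω)).filter (fun ω => ¬ f ω = μ), g ω) := by
    intro g
    rw [← Finset.sum_filter_add_sum_filter_not Finset.univ (fun ω => μ < f ω) g,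
      ← Finset.sum_filter_add_sum_filter_not (Finset.univ.filter (fun ω => ¬ μ < f ω))
        (fun ω => f ω = μ) g, hSEsum g]
  have hpsum : ∑ ω : Ω, p ω = 1 := by
    rw [hsumsplit p]
    have e1 : ∑ ω ∈ SA, p ω = A := by
      refine Finset.sum_congr rfl fun ω hω => ?_
      simp only [hpdef]
      rw [if_pos (Finset.mem_filter.1 hω).2]
    have e2 : ∑ ω ∈ SE, p ω = r := by
      have : ∑ ω ∈ SE, p ω = ∑ ω ∈ SE, pbar ω * (r / s) := by
        refine Finset.sum_congr rfl fun ω hω => ?_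
        have h2 := (Finset.mem_filter.1 hω).2
        rw [hpdef]
        simp only
        rw [if_neg (by rw [h2]; exact lt_irrefl μ), if_pos h2]
      rw [this, ← Finset.sum_mul, ← hsdef, mul_div_cancel₀ r hs.ne']
    have e3 : ∑ ω ∈ (Finset.univ.filter (fun ω => ¬ μ < f ω)).filter (fun ω => ¬ f ω = μ),
        p ω = 0 := by
      refine Finset.sum_eq_zero fun ω hω => ?_
      have h := Finset.mem_filter.1 hω
      have h1 := (Finset.mem_filter.1 h.1).2
      simp only [hpdef]
      rw [if_neg h1, if_neg h.2]
    rw [e1, e2, e3, hrdef]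
    ring
  set B : ℝ := ∑ ω ∈ SA, f ω * pbar ω with hBdef
  have hfp : ∑ ω : Ω, f ω * p ω = B + μ * r := by
    rw [hsumsplit (fun ω => f ω * p ω)]
    have e1 : ∑ ω ∈ SA, f ω * p ω = B := by
      refine Finset.sum_congr rfl fun ω hω => ?_
      simp only [hpdef]
      rw [if_pos (Finset.mem_filter.1 hω).2]
    have e2 : ∑ ω ∈ SE, f ω * p ω = μ * r := by
      have : ∑ ω ∈ SE, f ω * p ω = ∑ ω ∈ SE, μ * (r / s) * pbar ω := by
        refine Finset.sum_congr rfl fun ω hω => ?_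
        have h2 := (Finset.mem_filter.1 hω).2
        rw [hpdef]
        simp only
        rw [if_neg (by rw [h2]; exact lt_irrefl μ), if_pos h2, h2]
        ring
      rw [this, ← Finset.mul_sum, ← hsdef]
      field_simp
    have e3 : ∑ ω ∈ (Finset.univ.filter (fun ω => ¬ μ < f ω)).filter (fun ω => ¬ f ω = μ),
        f ω * p ω = 0 := by
      refine Finset.sum_eq_zero fun ω hω => ?_
      have h := Finset.mem_filter.1 hω
      have h1 := (Finset.mem_filter.1 h.1).2
      simp only [hpdef]
      rw [if_neg h1, if_neg h.2, mul_zero]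
    rw [e1, e2, e3, add_zero]
  set β : ℝ := B + μ * r with hβdef
  set S : Set ℝ := {β : ℝ | ∃ lam : Ω → ℝ, (∀ ω, 0 ≤ lam ω) ∧
    ∀ ω' : Ω, ∑ ω : Ω, lam ω * (pbar ω - (if ω' = ω then (1 : ℝ) else 0)) ≤ β - f ω'} with hSdef
  -- membership: β ∈ S via dual witness
  have hmem : β ∈ S := by
    refine ⟨fun ω => max (f ω - μ) 0, fun ω => le_max_right _ _, fun ω' => ?_⟩
    have hsum1 : ∑ ω : Ω, max (f ω - μ) 0 * (pbar ω - (if ω' = ω then (1 : ℝ) else 0))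
        = (∑ ω : Ω, max (f ω - μ) 0 * pbar ω) - max (f ω' - μ) 0 := by
      simp only [mul_sub, Finset.sum_sub_distrib, mul_ite, mul_one, mul_zero]
      congr 1
      rw [Finset.sum_ite_eq Finset.univ ω' (fun ω => max (f ω - μ) 0)]
      simp
    have hsum2 : ∑ ω : Ω, max (f ω - μ) 0 * pbar ω = B - μ * A := by
      have : ∀ ω : Ω, max (f ω - μ) 0 * pbar ω
          = if μ < f ω then (f ω - μ) * pbar ω else 0 := by
        intro ω
        split_ifs with h
        · rw [max_eq_left (by linarith)]
        · rw [max_eq_right (by push_neg at h; linarith), zero_mul]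
      simp_rw [this]
      rw [Finset.sum_ite, Finset.sum_const_zero, add_zero, ← hSAdef]
      simp_rw [sub_mul]
      rw [Finset.sum_sub_distrib, ← hBdef, ← Finset.mul_sum, ← hAdef]
    rw [hsum1, hsum2, hβdef, hrdef]
    have hmax : f ω' - max (f ω' - μ) 0 ≤ μ := by
      rcases le_total (f ω' - μ) 0 with h | h
      · rw [max_eq_right h]; linarith
      · rw [max_eq_left h]; linarith
    linarith
  -- lower bound: weak duality
  have hlb : ∀ b ∈ S, β ≤ b := by
    rintro b ⟨lam, hlam, hc⟩
    have key : ∑ ω' : Ω, p ω' * (∑ ω : Ω, lam ω * (pbar ω - (if ω' = ω then (1 : ℝ) else 0)))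
        ≤ ∑ ω' : Ω, p ω' * (b - f ω') :=
      Finset.sum_le_sum fun ω' _ => mul_le_mul_of_nonneg_left (hc ω') (hp0 ω')
    have e1 : ∑ ω' : Ω, p ω' * (∑ ω : Ω, lam ω * (pbar ω - (if ω' = ω then (1 : ℝ) else 0)))
        = ∑ ω : Ω, lam ω * (pbar ω - p ω) := by
      simp_rw [Finset.mul_sum]
      rw [Finset.sum_comm]
      refine Finset.sum_congr rfl fun ω _ => ?_
      simp only [mul_sub, mul_ite, mul_one, mul_zero, Finset.sum_sub_distrib]
      congr 1
      · simp_rw [show ∀ ω' : Ω, p ω' * (lam ω * pbar ω) = lam ω * pbar ω * p ω' from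
          fun ω' => by ring]
        rw [← Finset.mul_sum, hpsum, mul_one]
      · rw [Finset.sum_ite_eq' Finset.univ ω (fun ω' => p ω' * lam ω)]
        simp [mul_comm]
    have e2 : ∑ ω' : Ω, p ω' * (b - f ω') = b - ∑ ω : Ω, f ω * p ω := by
      simp_rw [mul_sub]
      rw [Finset.sum_sub_distrib, ← Finset.sum_mul, hpsum, one_mul]
      congr 1
      exact Finset.sum_congr rfl fun ω _ => mul_comm _ _
    rw [e1, e2] at key
    have e3 : 0 ≤ ∑ ω : Ω, lam ω * (pbar ω - p ω) :=
      Finset.sum_nonneg fun ω _ => mul_nonneg (hlam ω) (sub_nonneg.2 (hple ω))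
    have : ∑ ω : Ω, f ω * p ω ≤ b := by linarith
    rw [hfp] at this
    exact this
  refine ⟨p, hp0, hpsum, hple, ?_⟩
  rw [hfp]
  have : upperExt pbar f = sInf S := rfl
  rw [this]
  exact le_antisymm (le_csInf ⟨β, hmem⟩ hlb) (csInf_le ⟨β, hlb⟩ hmem)
end
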